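/- arXiv:1204.1349 — 4 statements merged into one kernel-verified Lean document; each statement's English description precedes it below -/
import Mathlib

section
/- A multigraph G = (V,E) is a P(2,1)-graph if and only if E is the edge-disjoint union of the edge set of a spanning tree of G and the edge set of a spanning connected map-graph of G. -/
/-!
If `G - e₀` is `(2,2)`-tight, it is the union of two edge-disjoint spanning trees (the case
`k = 2` of Nash-Williams' theorem), and `e₀` turns one of them into a connected spanning
map-graph. The `(2,2)` case goes by induction on `|V|`: counting degrees gives a vertex `v` of
degree 2 or 3. Deleting a degree-2 vertex keeps the graph `(2,2)`-tight; at a degree-3 vertex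
one splits off a pair of edges `vp, vq` into a new edge `pq`, choosing `p, q` in no set
`Y ∌ v` with `i(Y) ≥ 2|Y| - 2`, which keeps the graph `(2,2)`-tight. The two trees of the
smaller graph then extend over `v`.

Conversely, a connected spanning edge set `F` has at most `|X| - |V| + |F|` edges inside any
nonempty `X`, since the edges inside `X` span at least `|V| - |X| + 1` components. So a spanning
tree plus a connected spanning map-graph is `(2,1)`-tight, and deleting an edge of the cycle of
the map-graph leaves two spanning trees, hence a `(2,2)`-tight graph.
-/

/-! ### Multigraphs: finite vertex set `V`, finite edge set `E`; each edge `e` has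
endpoints `src e` and `dst e` (loops and parallel edges are allowed). -/

structure Multigraph (V E : Type) where
  src : E → V
  dst : E → V

namespace Multigraph

variable {V E : Type}

/-- `i(X)`: the number of edges both of whose endpoints lie in `X`. -/
def iCount [Fintype E] [DecidableEq V] (G : Multigraph V E) (X : Finset V) : ℕ :=
  (Finset.univ.filter fun e => G.src e ∈ X ∧ G.dst e ∈ X).card

/-- The degree of a vertex (a loop contributes 2). -/
def degree [Fintype E] [DecidableEq V] (G : Multigraph V E) (v : V) : ℕ :=
  (Finset.univ.filter fun e => G.src e = v).card +
    (Finset.univ.filter fun e => G.dst e = v).card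

/-- The set of neighbours of a vertex. -/
def neighborSet (G : Multigraph V E) (v : V) : Set V :=
  {w | ∃ e, (G.src e = v ∧ G.dst e = w) ∨ (G.src e = w ∧ G.dst e = v)}

/-- `(k,ℓ)`-sparsity: `i(X) ≤ k|X| − ℓ` for every `X ⊆ V` spanning at least one edge. -/
def Sparse [Fintype E] [DecidableEq V] (G : Multigraph V E) (k l : ℤ) : Prop :=
  ∀ X : Finset V, (∃ e, G.src e ∈ X ∧ G.dst e ∈ X) →
    (G.iCount X : ℤ) ≤ k * (X.card : ℤ) - l

/-- `(k,ℓ)`-tightness: `(k,ℓ)`-sparse and `|E| = k|V| − ℓ`. -/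
def Tight [Fintype V] [Fintype E] [DecidableEq V] (G : Multigraph V E) (k l : ℤ) : Prop :=
  G.Sparse k l ∧ (Fintype.card E : ℤ) = k * (Fintype.card V : ℤ) - l

/-- Delete a single edge. -/
def deleteEdge (G : Multigraph V E) (e₀ : E) : Multigraph V {e : E // e ≠ e₀} :=
  ⟨fun e => G.src e.1, fun e => G.dst e.1⟩

/-- Delete a vertex together with all edges incident to it. -/
def deleteVertex (G : Multigraph V E) (v : V) :
    Multigraph {w : V // w ≠ v} {e : E // G.src e ≠ v ∧ G.dst e ≠ v} :=
  ⟨fun e => ⟨G.src e.1, e.2.1⟩, fun e => ⟨G.dst e.1, e.2.2⟩⟩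

/-- Add one new edge with endpoints `u` and `w`. -/
def addEdge (G : Multigraph V E) (u w : V) : Multigraph V (E ⊕ Unit) :=
  ⟨Sum.elim G.src fun _ => u, Sum.elim G.dst fun _ => w⟩

/-- The subgraph induced by a set of vertices `X`. -/
def induce (G : Multigraph V E) (X : Finset V) :
    Multigraph {v : V // v ∈ X} {e : E // G.src e ∈ X ∧ G.dst e ∈ X} :=
  ⟨fun e => ⟨G.src e.1, e.2.1⟩, fun e => ⟨G.dst e.1, e.2.2⟩⟩

/-- `G` is a `P(2,1)`-graph: `(2,1)`-tight and some edge-deleted graph is `(2,2)`-tight. -/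
def IsP21 [Fintype V] [Fintype E] [DecidableEq V] [DecidableEq E] (G : Multigraph V E) : Prop :=
  G.Tight 2 1 ∧ ∃ e : E, (G.deleteEdge e).Tight 2 2

/-- `G` is a `(2,2)`-circuit: `|E| = 2|V| − 1` and every edge-deleted graph is `(2,2)`-tight. -/
def IsCircuit22 [Fintype V] [Fintype E] [DecidableEq V] [DecidableEq E]
    (G : Multigraph V E) : Prop :=
  (Fintype.card E : ℤ) = 2 * (Fintype.card V : ℤ) - 1 ∧
    ∀ e : E, (G.deleteEdge e).Tight 2 2

/-- `X` is an over-critical set (`i(X) = 2|X| − 1`) of minimum cardinality. -/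
def IsMinOverCritical [Fintype E] [DecidableEq V] (G : Multigraph V E) (X : Finset V) : Prop :=
  (G.iCount X : ℤ) = 2 * (X.card : ℤ) - 1 ∧
    ∀ Y : Finset V, (G.iCount Y : ℤ) = 2 * (Y.card : ℤ) - 1 → X.card ≤ Y.card

/-- `G` is (a copy of) `K₂³`: two distinct vertices joined by three parallel edges. -/
def IsK23 [Fintype E] (G : Multigraph V E) : Prop :=
  ∃ a b : V, a ≠ b ∧ (∀ v : V, v = a ∨ v = b) ∧ Fintype.card E = 3 ∧
    ∀ e : E, (G.src e = a ∧ G.dst e = b) ∨ (G.src e = b ∧ G.dst e = a)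

/-- Adjacency via an edge belonging to the edge subset `F`. -/
def AdjOn (G : Multigraph V E) (F : Set E) (u w : V) : Prop :=
  ∃ e ∈ F, (G.src e = u ∧ G.dst e = w) ∨ (G.src e = w ∧ G.dst e = u)

/-- Connectivity of the multigraph. -/
def Connected (G : Multigraph V E) : Prop :=
  Nonempty V ∧ ∀ u w : V, Relation.ReflTransGen (G.AdjOn Set.univ) u w

/-- 2-edge-connectivity: connected, and still connected after deleting any one edge. -/
def TwoEdgeConnected (G : Multigraph V E) : Prop :=
  G.Connected ∧ ∀ e₀ : E, ∀ u w : V, Relation.ReflTransGen (G.AdjOn {e | e ≠ e₀}) u w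

/-- Adjacency inside the induced subgraph on the vertex set `X`. -/
def AdjIn (G : Multigraph V E) (X : Set V) (u w : V) : Prop :=
  u ∈ X ∧ w ∈ X ∧ ∃ e, (G.src e = u ∧ G.dst e = w) ∨ (G.src e = w ∧ G.dst e = u)

/-- Connectivity of the induced subgraph on the vertex set `X`. -/
def ConnectedOn (G : Multigraph V E) (X : Set V) : Prop :=
  ∀ u ∈ X, ∀ w ∈ X, Relation.ReflTransGen (G.AdjIn X) u w

/-- `T` is the edge set of a spanning tree of `G`:
the spanning subgraph with edge set `T` is connected and `|T| = |V| − 1`. -/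
def IsSpanningTree [Fintype V] (G : Multigraph V E) (T : Finset E) : Prop :=
  (∀ u w : V, Relation.ReflTransGen (G.AdjOn (T : Set E)) u w) ∧ T.card + 1 = Fintype.card V

/-- `M` is the edge set of a spanning connected map-graph of `G`:
the spanning subgraph with edge set `M` is connected and has exactly `|V|` edges
(equivalently, it is connected with exactly one cycle). -/
def IsConnectedSpanningMapGraph [Fintype V] (G : Multigraph V E) (M : Finset E) : Prop :=
  (∀ u w : V, Relation.ReflTransGen (G.AdjOn (M : Set E)) u w) ∧ M.card = Fintype.card V

/-- `(X, F)` describes a subgraph of `G`: every edge of `F` has both endpoints in `X`. -/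
def IsSubgraphOn (G : Multigraph V E) (X : Finset V) (F : Finset E) : Prop :=
  ∀ e ∈ F, G.src e ∈ X ∧ G.dst e ∈ X

end Multigraph

theorem Fintype.card_subtype_ne {α : Type} [Fintype α] [DecidableEq α] (a : α) :
    Fintype.card {x // x ≠ a} = Fintype.card α - 1 := by
  rw [Fintype.card_subtype_compl, Fintype.card_subtype_eq]

theorem Finset.card_univ_filter_subtype {α : Type} [Fintype α] (p q : α → Prop) [DecidablePred p]
    [DecidablePred q] :
    (Finset.univ.filter fun a : {a // p a} => q a).card =
      (Finset.univ.filter fun a => p a ∧ q a).card := by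
  rw [← Finset.card_map (Function.Embedding.subtype _)]
  congr 1
  ext a
  simp [and_comm]

theorem Finset.compl_image_union_eq {α β : Type} [Fintype α] [DecidableEq α] [Fintype β]
    [DecidableEq β] {m : α → β} (hm : Function.Injective m) {R R' : Finset β}
    (hR : Disjoint R R') (hrange : ∀ b, b ∉ Set.range m ↔ b ∈ R ∪ R') (A : Finset α) :
    (A.image m ∪ R)ᶜ = Aᶜ.image m ∪ R' := by
  ext b
  by_cases hb : b ∈ Set.range m
  · obtain ⟨a, rfl⟩ := hb
    have hRR' : m a ∉ R ∪ R' := fun h => (hrange _).2 h ⟨a, rfl⟩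
    simp only [Finset.mem_union, not_or] at hRR'
    simp [hm.eq_iff, hRR']
  · have hb' : ∀ a, m a ≠ b := fun a h => hb ⟨a, h⟩
    rcases Finset.mem_union.1 ((hrange b).1 hb) with h | h
    · simp [hb', h, Finset.disjoint_left.1 hR h]
    · simp [hb', h, Finset.disjoint_right.1 hR h]

namespace Multigraph

variable {V E : Type} {G : Multigraph V E}

section Reachability

variable (G) in
abbrev Reachable (F : Set E) : V → V → Prop := Relation.ReflTransGen (G.AdjOn F)

variable (G) in
def IsSpanningConnected (F : Set E) : Prop := ∀ u w : V, G.Reachable F u w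

instance (F : Set E) : Std.Symm (G.AdjOn F) where
  symm _ _ := fun ⟨e, he, h⟩ => ⟨e, he, h.symm⟩

theorem Reachable.mono {F F' : Set E} (hF : F ⊆ F') {u w : V} (h : G.Reachable F u w) :
    G.Reachable F' u w :=
  Relation.ReflTransGen.mono (fun _ _ ⟨e, he, h⟩ => ⟨e, hF he, h⟩) _ _ h

theorem reachable_of_mem {F : Set E} {e : E} (he : e ∈ F) :
    G.Reachable F (G.src e) (G.dst e) :=
  .single ⟨e, he, .inl ⟨rfl, rfl⟩⟩

theorem Reachable.eq_of_notMem {X : Set V} {F : Set E}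
    (hF : ∀ e ∈ F, G.src e ∈ X ∧ G.dst e ∈ X) {u w : V}
    (h : G.Reachable F u w) (hu : u ∉ X) : u = w := by
  induction h using Relation.ReflTransGen.head_induction_on with
  | refl => rfl
  | head hstep _ _ =>
    obtain ⟨e, he, ⟨hsrc, -⟩ | ⟨-, hdst⟩⟩ := hstep
    · exact absurd (hsrc ▸ (hF e he).1) hu
    · exact absurd (hdst ▸ (hF e he).2) hu

theorem Reachable.of_insert {F : Set E} {e : E} {u w : V} (h : G.Reachable (insert e F) u w) :
    G.Reachable F u w ∨
      (G.Reachable F u (G.src e) ∨ G.Reachable F u (G.dst e)) ∧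
        (G.Reachable F w (G.src e) ∨ G.Reachable F w (G.dst e)) := by
  induction h with
  | refl => exact .inl .refl
  | @tail x y _ hstep ih =>
    obtain ⟨e', he' | he', hends⟩ := hstep
    · subst he'
      have hy : G.Reachable F y (G.src e') ∨ G.Reachable F y (G.dst e') := by
        rcases hends with ⟨-, rfl⟩ | ⟨rfl, -⟩
        exacts [.inr .refl, .inl .refl]
      refine .inr ⟨?_, hy⟩
      rcases ih with hux | ⟨hu, -⟩
      · rcases hends with ⟨rfl, -⟩ | ⟨-, rfl⟩
        exacts [.inl hux, .inr hux]
      · exact hu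
    · have hxy : G.Reachable F x y := .single ⟨e', he', hends⟩
      rcases ih with hux | ⟨hu, hx⟩
      · exact .inl (hux.trans hxy)
      · exact .inr ⟨hu, hx.imp (symm hxy).trans (symm hxy).trans⟩

theorem Reachable.of_insert_of_reachable {F : Set E} {e : E}
    (he : G.Reachable F (G.src e) (G.dst e)) {u w : V} (h : G.Reachable (insert e F) u w) :
    G.Reachable F u w := by
  rcases h.of_insert with h | ⟨hu, hw⟩
  · exact h
  · have hu' : G.Reachable F u (G.src e) := hu.elim id (·.trans (symm he))
    have hw' : G.Reachable F w (G.src e) := hw.elim id (·.trans (symm he))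
    exact hu'.trans (symm hw')

end Reachability

section Components

variable (G) in
def componentSetoid (F : Set E) : Setoid V where
  r := G.Reachable F
  iseqv := ⟨fun _ => .refl, fun h => symm h, .trans⟩

variable (G) in
noncomputable def numComponents (F : Set E) : ℕ := Nat.card (Quotient (G.componentSetoid F))

variable (G) in
def componentMap {F F' : Set E} (h : F ⊆ F') :
    Quotient (G.componentSetoid F) → Quotient (G.componentSetoid F') :=
  Quotient.map' id fun _ _ => Reachable.mono h

theorem numComponents_empty [Finite V] : G.numComponents ∅ = Nat.card V := by
  refine (Nat.card_eq_of_bijective _ ⟨fun u w h => ?_, Quotient.mk_surjective⟩).symm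
  have h' : G.Reachable ∅ u w := Quotient.exact h
  exact h'.eq_of_notMem (X := ∅) (by simp) (Set.notMem_empty u)

theorem numComponents_le_insert [Finite V] (F : Set E) (e : E) :
    G.numComponents F ≤ G.numComponents (insert e F) + 1 := by
  classical
  let s := G.componentSetoid F
  let s' := G.componentSetoid (insert e F)
  let coarsen := G.componentMap (Set.subset_insert e F)
  -- injective: only the classes of `src e` and `dst e` merge, and the first is sent to `()`
  let f : Quotient s → Quotient s' ⊕ Unit := fun x =>
    if x = ⟦G.src e⟧ then .inr () else .inl (coarsen x)
  have hmerge : ∀ x y : Quotient s, coarsen x = coarsen y → x ≠ ⟦G.src e⟧ → y ≠ ⟦G.src e⟧ →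
      x = y := by
    rintro ⟨u⟩ ⟨w⟩ huw hu hw
    rcases (Quotient.exact huw : G.Reachable (insert e F) u w).of_insert with h | ⟨hu', hw'⟩
    · exact Quotient.sound h
    · have hu'' : G.Reachable F u (G.dst e) := hu'.resolve_left fun h => hu (Quotient.sound h)
      have hw'' : G.Reachable F w (G.dst e) := hw'.resolve_left fun h => hw (Quotient.sound h)
      exact Quotient.sound (hu''.trans (symm hw''))
  have hf : Function.Injective f := by
    intro x y h
    by_cases hx : x = ⟦G.src e⟧ <;> by_cases hy : y = ⟦G.src e⟧
    · exact hx.trans hy.symm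
    all_goals simp only [f, hx, hy, if_true, if_false, reduceCtorEq, Sum.inl.injEq] at h
    exact hmerge x y h hx hy
  calc G.numComponents F ≤ Nat.card (Quotient s' ⊕ Unit) := Nat.card_le_card_of_injective f hf
    _ = G.numComponents (insert e F) + 1 := by simp [Nat.card_sum, numComponents, s']

theorem componentMap_surjective {F F' : Set E} (h : F ⊆ F') :
    Function.Surjective (G.componentMap h) := by
  rintro ⟨u⟩
  exact ⟨⟦u⟧, rfl⟩

theorem numComponents_insert_lt [Finite V] {F : Set E} {e : E}
    (he : ¬ G.Reachable F (G.src e) (G.dst e)) :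
    G.numComponents (insert e F) < G.numComponents F := by
  have hsub := Set.subset_insert e F
  have : Fintype (Quotient (G.componentSetoid F)) := Fintype.ofFinite _
  have : Fintype (Quotient (G.componentSetoid (insert e F))) := Fintype.ofFinite _
  rw [numComponents, numComponents, Nat.card_eq_fintype_card, Nat.card_eq_fintype_card]
  refine Fintype.card_lt_of_surjective_not_injective _ (G.componentMap_surjective hsub)
    fun hinj => he (Quotient.exact (hinj (Quotient.sound ?_)))
  exact reachable_of_mem (Set.mem_insert e F)

theorem numComponents_le_union_add_card [Finite V] [DecidableEq E] (F : Set E) (D : Finset E) :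
    G.numComponents F ≤ G.numComponents (F ∪ D) + D.card := by
  induction D using Finset.induction_on with
  | empty => simp
  | @insert e D he ih =>
    have := G.numComponents_le_insert (F ∪ D) e
    rw [Finset.coe_insert, Set.union_insert, Finset.card_insert_of_notMem he]
    omega

theorem numComponents_eq_one [Nonempty V] {F : Set E} (hF : G.IsSpanningConnected F) :
    G.numComponents F = 1 := by
  rw [numComponents, Nat.card_eq_one_iff_unique]
  refine ⟨⟨?_⟩, ⟨⟦Classical.arbitrary V⟧⟩⟩
  rintro ⟨u⟩ ⟨w⟩
  exact Quotient.sound (hF u w)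

/-- The vertices outside `X` are isolated points of `F`, each its own component. -/
theorem card_sub_card_add_one_le_numComponents [Fintype V] [DecidableEq V] {X : Finset V}
    (hX : X.Nonempty) {F : Set E} (hF : ∀ e ∈ F, G.src e ∈ X ∧ G.dst e ∈ X) :
    Fintype.card V - X.card + 1 ≤ G.numComponents F := by
  obtain ⟨x₀, hx₀⟩ := hX
  let f : Option {w : V // w ∉ X} → Quotient (G.componentSetoid F) :=
    fun w => ⟦w.elim x₀ Subtype.val⟧
  have hisolated : ∀ (w : {w : V // w ∉ X}) (u : V), G.Reachable F w u → (w : V) = u :=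
    fun w _ h => h.eq_of_notMem (X := X) hF w.2
  have hf : Function.Injective f := by
    rintro (_ | w) (_ | w') h <;> have h' := Quotient.exact h
    · rfl
    · exact absurd (hisolated w' _ (symm h') ▸ hx₀) w'.2
    · exact absurd (hisolated w _ h' ▸ hx₀) w.2
    · exact congrArg some (Subtype.ext (hisolated w _ h'))
  have := Nat.card_le_card_of_injective f hf
  rwa [Nat.card_eq_fintype_card, Fintype.card_option, Fintype.card_subtype_compl,
    Fintype.card_coe] at this

end Components

section SpanningConnected

theorem IsSpanningConnected.card_filter_add_card_le [Fintype V] [DecidableEq V] [DecidableEq E]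
    {F : Finset E} (hF : G.IsSpanningConnected F) {X : Finset V} (hX : X.Nonempty) :
    (F.filter fun e => G.src e ∈ X ∧ G.dst e ∈ X).card + Fintype.card V ≤ X.card + F.card := by
  have : Nonempty V := ⟨hX.choose⟩
  set FX := F.filter fun e => G.src e ∈ X ∧ G.dst e ∈ X
  have hFX : FX ⊆ F := Finset.filter_subset _ F
  have hupper : G.numComponents FX ≤ 1 + (F.card - FX.card) := by
    have := G.numComponents_le_union_add_card FX (F \ FX)
    rwa [← Finset.coe_union, Finset.union_sdiff_of_subset hFX, numComponents_eq_one hF,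
      Finset.card_sdiff_of_subset hFX] at this
  have hlower := G.card_sub_card_add_one_le_numComponents hX (F := FX) fun e he =>
    (Finset.mem_filter.1 he).2
  have := Finset.card_le_univ X
  have := Finset.card_le_card hFX
  omega

theorem numComponents_add_card_of_forall_not_reachable [Finite V] [DecidableEq E] {F : Finset E}
    (hF : ∀ e ∈ F, ¬ G.Reachable ↑(F.erase e) (G.src e) (G.dst e)) :
    G.numComponents F + F.card = Nat.card V := by
  induction F using Finset.strongInductionOn with
  | _ F ih =>
    rcases F.eq_empty_or_nonempty with rfl | ⟨e, he⟩
    · simp [numComponents_empty]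
    have hinsert : (F : Set E) = insert e ↑(F.erase e) := by
      rw [Finset.coe_erase, Set.insert_sdiff_singleton, Set.insert_eq_of_mem he]
    have herase : G.numComponents ↑(F.erase e) + (F.erase e).card = Nat.card V := by
      refine ih _ (Finset.erase_ssubset he) fun e' he' h => hF e' (Finset.mem_of_mem_erase he') ?_
      exact h.mono (Finset.coe_subset.2 (Finset.erase_subset_erase e' (Finset.erase_subset e F)))
    have hle := G.numComponents_le_insert ↑(F.erase e) e
    have hlt := numComponents_insert_lt (hF e he)
    rw [← hinsert] at hle hlt
    have := Finset.card_erase_add_one he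
    omega

theorem IsSpanningConnected.exists_erase [Finite V] [Nonempty V] [DecidableEq E] {F : Finset E}
    (hF : G.IsSpanningConnected F) (hcard : Nat.card V ≤ F.card) :
    ∃ e ∈ F, G.IsSpanningConnected ↑(F.erase e) := by
  by_contra! hbridge
  have hcount := numComponents_add_card_of_forall_not_reachable (G := G) (F := F)
    fun e he hreach => (hbridge e he).elim fun u w => hreach.of_insert_of_reachable <| by
      rw [← Finset.coe_insert, Finset.insert_erase he]
      exact hF u w
  rw [numComponents_eq_one hF] at hcount
  omega

end SpanningConnected

section Counting

variable [Fintype E] [DecidableEq V]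

theorem Sparse.iCount_le {k l : ℤ} (hs : G.Sparse k l) (hk : 0 ≤ k) (hlk : l ≤ k)
    {X : Finset V} (hX : X.Nonempty) : (G.iCount X : ℤ) ≤ k * X.card - l := by
  by_cases hspan : ∃ e, G.src e ∈ X ∧ G.dst e ∈ X
  · exact hs X hspan
  push Not at hspan
  have hzero : G.iCount X = 0 :=
    Finset.card_eq_zero.2 (Finset.filter_eq_empty_iff.2 fun e _ he => hspan e he.1 he.2)
  have : (1 : ℤ) ≤ X.card := by exact_mod_cast hX.card_pos
  rw [hzero]
  push_cast
  nlinarith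

theorem Sparse.src_ne_dst {k l : ℤ} (hs : G.Sparse k l) (hkl : k ≤ l) (e : E) :
    G.src e ≠ G.dst e := by
  intro hloop
  have hspan : G.src e ∈ ({G.src e} : Finset V) ∧ G.dst e ∈ ({G.src e} : Finset V) := by
    simp [hloop]
  have hpos : 0 < G.iCount {G.src e} :=
    Finset.card_pos.2 ⟨e, Finset.mem_filter.2 ⟨Finset.mem_univ e, hspan⟩⟩
  have := hs {G.src e} ⟨e, hspan⟩
  rw [Finset.card_singleton] at this
  omega

theorem iCount_add_iCount_le_iCount_union_add_iCount_inter (X Y : Finset V) :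
    G.iCount X + G.iCount Y ≤ G.iCount (X ∪ Y) + G.iCount (X ∩ Y) := by
  classical
  let spans : Finset V → Finset E := fun Z => Finset.univ.filter fun e => G.src e ∈ Z ∧ G.dst e ∈ Z
  have hunion : spans X ∪ spans Y ⊆ spans (X ∪ Y) := by
    intro e
    simp only [spans, Finset.mem_union, Finset.mem_filter, Finset.mem_univ, true_and]
    tauto
  have hinter : spans X ∩ spans Y = spans (X ∩ Y) := by
    ext e
    simp only [spans, Finset.mem_inter, Finset.mem_filter, Finset.mem_univ, true_and]
    tauto
  have hcard := Finset.card_union_add_card_inter (spans X) (spans Y)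
  rw [hinter] at hcard
  have := Finset.card_le_card hunion
  change (spans X).card + (spans Y).card ≤ (spans (X ∪ Y)).card + (spans (X ∩ Y)).card
  omega

theorem le_iCount_union (hs : G.Sparse 2 2) {Y Z : Finset V}
    (hY : 2 * (Y.card : ℤ) - 2 ≤ G.iCount Y) (hZ : 2 * (Z.card : ℤ) - 2 ≤ G.iCount Z)
    (hYZ : (Y ∩ Z).Nonempty) : 2 * ((Y ∪ Z).card : ℤ) - 2 ≤ G.iCount (Y ∪ Z) := by
  have hsuper : (G.iCount Y : ℤ) + G.iCount Z ≤ G.iCount (Y ∪ Z) + G.iCount (Y ∩ Z) := by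
    exact_mod_cast G.iCount_add_iCount_le_iCount_union_add_iCount_inter Y Z
  have hcard : ((Y ∪ Z).card : ℤ) + (Y ∩ Z).card = Y.card + Z.card := by
    exact_mod_cast Finset.card_union_add_card_inter Y Z
  have := hs.iCount_le (by norm_num) le_rfl hYZ
  linarith

theorem iCount_deleteEdge [DecidableEq E] (e₀ : E) (X : Finset V) :
    (G.deleteEdge e₀).iCount X =
      ((Finset.univ.erase e₀).filter fun e => G.src e ∈ X ∧ G.dst e ∈ X).card := by
  rw [← Finset.filter_ne', Finset.filter_filter]
  exact Finset.card_univ_filter_subtype (· ≠ e₀) fun e => G.src e ∈ X ∧ G.dst e ∈ X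

theorem iCount_deleteVertex (v : V) (X : Finset {w // w ≠ v}) :
    (G.deleteVertex v).iCount X = G.iCount (X.map (Function.Embedding.subtype _)) := by
  rw [iCount, iCount, ← Finset.card_map (Function.Embedding.subtype _)]
  congr 1
  ext e
  simp only [Finset.mem_map, Finset.mem_filter, Finset.mem_univ, true_and,
    Function.Embedding.coe_subtype]
  constructor
  · rintro ⟨e', ⟨hsrc, hdst⟩, rfl⟩
    exact ⟨⟨_, hsrc, rfl⟩, ⟨_, hdst, rfl⟩⟩
  · rintro ⟨⟨⟨a, ha⟩, haX, rfl⟩, ⟨⟨b, hb⟩, hbX, hdst⟩⟩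
    subst hdst
    exact ⟨⟨e, ha, hb⟩, ⟨haX, hbX⟩, rfl⟩

theorem iCount_addEdge (u w : V) (X : Finset V) :
    (G.addEdge u w).iCount X = G.iCount X + if u ∈ X ∧ w ∈ X then 1 else 0 := by
  simp only [iCount, Finset.card_filter, Fintype.sum_sum_type]
  simp only [addEdge, Sum.elim_inl, Sum.elim_inr, Finset.univ_unique, Finset.sum_singleton]
  rfl

theorem Sparse.deleteVertex {k l : ℤ} (hs : G.Sparse k l) (v : V) :
    (G.deleteVertex v).Sparse k l := by
  rintro X ⟨e, hsrc, hdst⟩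
  rw [iCount_deleteVertex, ← Finset.card_map (Function.Embedding.subtype _) (s := X)]
  exact hs _ ⟨e.1, Finset.mem_map_of_mem _ hsrc, Finset.mem_map_of_mem _ hdst⟩

end Counting

section Incidence

variable [Fintype E] [DecidableEq V]

variable (G) in
def incidenceFinset (v : V) : Finset E := Finset.univ.filter fun e => G.src e = v ∨ G.dst e = v

variable (G) in
def otherEnd (v : V) (e : E) : V := if G.src e = v then G.dst e else G.src e

theorem ends_of_mem_incidenceFinset {v : V} {e : E} (he : e ∈ G.incidenceFinset v) :
    (G.src e = v ∧ G.dst e = G.otherEnd v e) ∨ (G.src e = G.otherEnd v e ∧ G.dst e = v) := by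
  unfold otherEnd
  split_ifs with hsrc
  · exact .inl ⟨hsrc, rfl⟩
  · exact .inr ⟨rfl, ((Finset.mem_filter.1 he).2.resolve_left hsrc)⟩

theorem adjOn_otherEnd {F : Set E} {v : V} {e : E} (heF : e ∈ F)
    (he : e ∈ G.incidenceFinset v) : G.AdjOn F v (G.otherEnd v e) := by
  rcases ends_of_mem_incidenceFinset he with h | h
  exacts [⟨e, heF, .inl h⟩, ⟨e, heF, .inr h⟩]

theorem otherEnd_ne {v : V} {e : E} (hloop : G.src e ≠ G.dst e)
    (he : e ∈ G.incidenceFinset v) : G.otherEnd v e ≠ v := by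
  rintro hv
  rcases ends_of_mem_incidenceFinset he with ⟨h₁, h₂⟩ | ⟨h₁, h₂⟩ <;>
    exact hloop (by rw [h₁, h₂, hv])

theorem val_notMem_incidenceFinset {v : V} (e : {e // G.src e ≠ v ∧ G.dst e ≠ v}) :
    e.1 ∉ G.incidenceFinset v := by
  simp [incidenceFinset, e.2.1, e.2.2]

theorem card_incidenceFinset_le_degree (v : V) : (G.incidenceFinset v).card ≤ G.degree v := by
  classical
  rw [incidenceFinset, degree, Finset.filter_or]
  exact Finset.card_union_le _ _

theorem sum_degree [Fintype V] : ∑ v, G.degree v = 2 * Fintype.card E := by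
  simp only [degree, Finset.sum_add_distrib, two_mul]
  congr 1 <;> exact (Finset.card_eq_sum_card_fiberwise fun e _ => Finset.mem_univ _).symm

theorem card_edges_deleteVertex (v : V) :
    Fintype.card {e // G.src e ≠ v ∧ G.dst e ≠ v} =
      Fintype.card E - (G.incidenceFinset v).card := by
  have := Finset.card_filter_add_card_filter_not (s := Finset.univ)
    (p := fun e => G.src e = v ∨ G.dst e = v)
  simp only [not_or] at this
  rw [Fintype.card_subtype, incidenceFinset, ← Finset.card_univ]
  simp only [ne_eq]
  omega

theorem iCount_erase_eq_card_edges_deleteVertex [Fintype V] (v : V) :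
    G.iCount (Finset.univ.erase v) = Fintype.card {e // G.src e ≠ v ∧ G.dst e ≠ v} := by
  rw [Fintype.card_subtype, iCount]
  simp only [Finset.mem_erase, Finset.mem_univ, and_true]

theorem Tight.exists_card_incidenceFinset_le_three [Fintype V] (hG : G.Tight 2 2) :
    ∃ v, (G.incidenceFinset v).card ≤ 3 := by
  by_contra! hbig
  have hsum : Finset.univ.card • 4 ≤ ∑ v, G.degree v :=
    Finset.card_nsmul_le_sum _ _ _ fun v _ => (hbig v).trans_le (card_incidenceFinset_le_degree v)
  rw [sum_degree, Finset.card_univ, smul_eq_mul] at hsum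
  have := hG.2
  omega

/-- Deleting `v` leaves at most `2(|V| - 1) - 2` edges, so `v` carries at least two. -/
theorem Tight.two_le_card_incidenceFinset [Fintype V] (hG : G.Tight 2 2)
    (hV : 2 ≤ Fintype.card V) (v : V) : 2 ≤ (G.incidenceFinset v).card := by
  have hrest := G.card_edges_deleteVertex v
  rw [← iCount_erase_eq_card_edges_deleteVertex] at hrest
  obtain ⟨u, hu⟩ := Fintype.exists_ne_of_one_lt_card hV v
  have hsparse := hG.1.iCount_le (by norm_num) le_rfl (X := Finset.univ.erase v)
    ⟨u, Finset.mem_erase.2 ⟨hu, Finset.mem_univ u⟩⟩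
  rw [Finset.card_erase_of_mem (Finset.mem_univ v), Finset.card_univ] at hsparse
  have := hG.2
  have := Finset.card_le_univ (G.incidenceFinset v)
  omega

theorem iCount_add_card_incidenceFinset_le {U : Finset V} {v : V} (hv : v ∉ U)
    (hU : ∀ e ∈ G.incidenceFinset v, G.otherEnd v e ∈ U) :
    G.iCount U + (G.incidenceFinset v).card ≤ G.iCount (insert v U) := by
  classical
  have hdisj : Disjoint (Finset.univ.filter fun e => G.src e ∈ U ∧ G.dst e ∈ U)
      (G.incidenceFinset v) := by
    refine Finset.disjoint_left.2 fun e he hev => ?_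
    rcases (Finset.mem_filter.1 hev).2 with h | h <;> rw [← h] at hv
    exacts [hv (Finset.mem_filter.1 he).2.1, hv (Finset.mem_filter.1 he).2.2]
  rw [iCount, iCount, ← Finset.card_union_of_disjoint hdisj]
  refine Finset.card_le_card fun e he => Finset.mem_filter.2 ⟨Finset.mem_univ e, ?_⟩
  rcases Finset.mem_union.1 he with he | he
  · exact ⟨Finset.mem_insert_of_mem (Finset.mem_filter.1 he).2.1,
      Finset.mem_insert_of_mem (Finset.mem_filter.1 he).2.2⟩
  · rcases ends_of_mem_incidenceFinset he with ⟨h₁, h₂⟩ | ⟨h₁, h₂⟩ <;> rw [h₁, h₂]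
    exacts [⟨Finset.mem_insert_self v U, Finset.mem_insert_of_mem (hU e he)⟩,
      ⟨Finset.mem_insert_of_mem (hU e he), Finset.mem_insert_self v U⟩]

end Incidence

theorem adjOn_of_adjOn_deleteVertex {v : V} {S : Set {e // G.src e ≠ v ∧ G.dst e ≠ v}}
    {F : Set E} (hSF : ∀ e ∈ S, e.1 ∈ F) {a b : {w // w ≠ v}}
    (h : (G.deleteVertex v).AdjOn S a b) : G.AdjOn F a b := by
  obtain ⟨e, he, ⟨rfl, rfl⟩ | ⟨rfl, rfl⟩⟩ := h
  exacts [⟨e.1, hSF e he, .inl ⟨rfl, rfl⟩⟩, ⟨e.1, hSF e he, .inr ⟨rfl, rfl⟩⟩]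

/-- The new edge `pq` of `G - v + pq` is sent to `f`, and becomes the path `p v q` through
`f` and `g`. -/
theorem reachable_of_adjOn_splitOff [Fintype E] [DecidableEq V] [DecidableEq E] {v : V}
    {p q : {w // w ≠ v}} {f g x : E} (hf : f ∈ G.incidenceFinset v) (hp : G.otherEnd v f = p)
    (hg : g ∈ G.incidenceFinset v) (hq : G.otherEnd v g = q)
    {S : Finset ({e // G.src e ≠ v ∧ G.dst e ≠ v} ⊕ Unit)} (hx : Sum.inr () ∈ S → x = g)
    {a b : {w // w ≠ v}} (hab : ((G.deleteVertex v).addEdge p q).AdjOn S a b) :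
    G.Reachable ↑(S.image (Sum.elim Subtype.val fun _ => f) ∪ {x}) a b := by
  obtain ⟨e | _, he, hends⟩ := hab
  · refine .single (adjOn_of_adjOn_deleteVertex (S := {e}) ?_ ⟨e, rfl, hends⟩)
    rintro _ rfl
    exact Finset.mem_union_left _ (Finset.mem_image_of_mem _ he)
  · set T := S.image (Sum.elim Subtype.val fun _ => f) ∪ {x}
    have hfT : f ∈ T := Finset.mem_union_left _ (Finset.mem_image_of_mem _ he)
    have hgT : g ∈ T := by simp [T, hx he]
    have hvp : G.Reachable T v p := by
      rw [← hp]
      exact .single (adjOn_otherEnd hfT hf)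
    have hvq : G.Reachable T v q := by
      rw [← hq]
      exact .single (adjOn_otherEnd hgT hg)
    have hpq := (symm hvp).trans hvq
    rcases hends with ⟨rfl, rfl⟩ | ⟨rfl, rfl⟩
    exacts [hpq, symm hpq]

theorem notMem_range_val_iff [Fintype E] [DecidableEq V] {v : V} {e : E} :
    e ∉ Set.range (Subtype.val : {e // G.src e ≠ v ∧ G.dst e ≠ v} → E) ↔
      e ∈ G.incidenceFinset v := by
  simp [incidenceFinset, or_iff_not_imp_left]

section Extension

variable [Fintype V] [DecidableEq V] [Fintype E] [DecidableEq E]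

variable (G) in
def SplitsIntoTwoSpanningTrees : Prop := ∃ T : Finset E, G.IsSpanningTree T ∧ G.IsSpanningTree Tᶜ

theorem IsSpanningTree.extend {v : V} {E' : Type} {G' : Multigraph {w // w ≠ v} E'}
    {S : Finset E'} (hS : G'.IsSpanningTree S) {m : E' → E} (hm : Function.Injective m)
    {x : E} (hxm : x ∉ Set.range m) (hxv : x ∈ G.incidenceFinset v) (hloop : G.src x ≠ G.dst x)
    (hstep : ∀ a b, G'.AdjOn S a b → G.Reachable ↑(S.image m ∪ {x}) a b) :
    G.IsSpanningTree (S.image m ∪ {x}) := by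
  set T := S.image m ∪ {x}
  have hvp : G.Reachable T v (G.otherEnd v x) := .single (adjOn_otherEnd (by simp [T]) hxv)
  have hrest : ∀ a b : {w // w ≠ v}, G.Reachable T a b := fun a b =>
    Relation.ReflTransGen.lift' Subtype.val hstep a b (hS.1 a b)
  have hreach_v : ∀ u, G.Reachable T v u := fun u => by
    by_cases hu : u = v
    · exact hu ▸ .refl
    · exact hvp.trans (hrest ⟨_, otherEnd_ne hloop hxv⟩ ⟨u, hu⟩)
  refine ⟨fun u w => ?_, ?_⟩
  · by_cases hu : u = v
    · exact hu ▸ hreach_v w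
    by_cases hw : w = v
    · exact hw ▸ symm (hreach_v u)
    · exact hrest ⟨u, hu⟩ ⟨w, hw⟩
  · have hxS : x ∉ S.image m := fun h => by
      obtain ⟨a, -, rfl⟩ := Finset.mem_image.1 h
      exact hxm ⟨a, rfl⟩
    have hV' := hS.2
    rw [Fintype.card_subtype_ne] at hV'
    have := Fintype.card_pos_iff.2 ⟨v⟩
    rw [Finset.card_union_of_disjoint (Finset.disjoint_singleton_right.2 hxS),
      Finset.card_image_of_injective _ hm, Finset.card_singleton]
    omega

end Extension

section Reduction

variable [Fintype V] [DecidableEq V] [Fintype E]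

theorem Tight.deleteVertex (hG : G.Tight 2 2) {v : V} (hv : (G.incidenceFinset v).card = 2) :
    (G.deleteVertex v).Tight 2 2 := by
  refine ⟨hG.1.deleteVertex v, ?_⟩
  rw [card_edges_deleteVertex, hv, Fintype.card_subtype_ne]
  have := hG.2
  have := Finset.card_le_univ (G.incidenceFinset v)
  omega

theorem splitsIntoTwoSpanningTrees_of_card_incidenceFinset_eq_two [DecidableEq E]
    (hG : G.Tight 2 2) {v : V} (hv : (G.incidenceFinset v).card = 2)
    (ih : ∀ (E' : Type) [Fintype E'] [DecidableEq E'] (G' : Multigraph {w // w ≠ v} E'),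
      G'.Tight 2 2 → G'.SplitsIntoTwoSpanningTrees) :
    G.SplitsIntoTwoSpanningTrees := by
  obtain ⟨e₁, e₂, hne, hinc⟩ := Finset.card_eq_two.1 hv
  have hloop := hG.1.src_ne_dst le_rfl
  obtain ⟨A, hA, hAc⟩ := ih _ _ (hG.deleteVertex hv)
  have hrange : ∀ e, e ∉ Set.range (Subtype.val : {e // G.src e ≠ v ∧ G.dst e ≠ v} → E) ↔
      e = e₁ ∨ e = e₂ := fun e => notMem_range_val_iff.trans (by simp [hinc])
  have hstep (S : Finset {e // G.src e ≠ v ∧ G.dst e ≠ v}) (x : E) (a b : {w // w ≠ v})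
      (h : (G.deleteVertex v).AdjOn S a b) : G.Reachable ↑(S.image Subtype.val ∪ {x}) a b :=
    .single (adjOn_of_adjOn_deleteVertex (fun e he =>
      Finset.mem_union_left _ (Finset.mem_image_of_mem _ he)) h)
  have he₁ : e₁ ∈ G.incidenceFinset v := by simp [hinc]
  have he₂ : e₂ ∈ G.incidenceFinset v := by simp [hinc]
  refine ⟨A.image Subtype.val ∪ {e₁}, hA.extend Subtype.val_injective
    ((hrange e₁).2 (.inl rfl)) he₁ (hloop e₁) (hstep A e₁), ?_⟩
  rw [Finset.compl_image_union_eq Subtype.val_injective (Finset.disjoint_singleton.2 hne)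
    (by simpa using hrange)]
  exact hAc.extend Subtype.val_injective ((hrange e₂).2 (.inr rfl)) he₂ (hloop e₂) (hstep Aᶜ e₂)

end Reduction

section SplittingOff

variable [Fintype V] [DecidableEq V] [Fintype E]

/-- If every pair lay in some `Y ∌ v` with `i(Y) ≥ 2|Y| - 2`, these three sets would glue
(`le_iCount_union`) to a set `U ∌ v` with `i(U + v) ≥ 2|U| + 1`. -/
theorem Sparse.exists_splittable_pair [DecidableEq E] (hs : G.Sparse 2 2) {v : V}
    (hv : (G.incidenceFinset v).card = 3) :
    ∃ f g h, G.incidenceFinset v = {f, g, h} ∧ f ≠ g ∧ f ≠ h ∧ g ≠ h ∧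
      ∀ Y : Finset V, v ∉ Y → G.otherEnd v f ∈ Y → G.otherEnd v g ∈ Y →
        (G.iCount Y : ℤ) < 2 * Y.card - 2 := by
  obtain ⟨e₁, e₂, e₃, h₁₂, h₁₃, h₂₃, hinc⟩ := Finset.card_eq_three.1 hv
  by_contra! hblocked
  obtain ⟨Y₁, hvY₁, h₁Y₁, h₂Y₁, hY₁⟩ := hblocked e₁ e₂ e₃ hinc h₁₂ h₁₃ h₂₃
  obtain ⟨Y₂, hvY₂, h₂Y₂, h₃Y₂, hY₂⟩ :=
    hblocked e₂ e₃ e₁ (by rw [hinc]; ext; simp; tauto) h₂₃ h₁₂.symm h₁₃.symm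
  obtain ⟨Y₃, hvY₃, h₁Y₃, h₃Y₃, hY₃⟩ :=
    hblocked e₁ e₃ e₂ (by rw [hinc]; ext; simp; tauto) h₁₃ h₁₂ h₂₃.symm
  set U := Y₁ ∪ Y₂ ∪ Y₃
  have hU : 2 * (U.card : ℤ) - 2 ≤ G.iCount U :=
    le_iCount_union hs (le_iCount_union hs hY₁ hY₂ ⟨_, Finset.mem_inter.2 ⟨h₂Y₁, h₂Y₂⟩⟩) hY₃
      ⟨_, Finset.mem_inter.2 ⟨Finset.mem_union_left _ h₁Y₁, h₁Y₃⟩⟩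
  have hvU : v ∉ U := by simp [U, hvY₁, hvY₂, hvY₃]
  have hends : ∀ e ∈ G.incidenceFinset v, G.otherEnd v e ∈ U := by
    simp only [hinc, Finset.mem_insert, Finset.mem_singleton, forall_eq_or_imp, forall_eq]
    simp [U, h₁Y₁, h₂Y₁, h₃Y₂]
  have hgrow := iCount_add_card_incidenceFinset_le hvU hends
  have hsparse := hs.iCount_le (by norm_num) le_rfl (Finset.insert_nonempty v U)
  rw [Finset.card_insert_of_notMem hvU] at hsparse
  rw [hv] at hgrow
  push_cast at hsparse
  omega

theorem Tight.addEdge_deleteVertex (hG : G.Tight 2 2) {v : V}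
    (hv : (G.incidenceFinset v).card = 3) {p q : {w // w ≠ v}}
    (hpq : ∀ Y : Finset V, v ∉ Y → (p : V) ∈ Y → (q : V) ∈ Y → (G.iCount Y : ℤ) < 2 * Y.card - 2) :
    ((G.deleteVertex v).addEdge p q).Tight 2 2 := by
  refine ⟨?_, ?_⟩
  · rintro X ⟨e, hsrc, -⟩
    rw [iCount_addEdge, iCount_deleteVertex, ← Finset.card_map (Function.Embedding.subtype _)]
    set Y := X.map (Function.Embedding.subtype _)
    have hvY : v ∉ Y := by simp [Y]
    split_ifs with hin
    · have := hpq Y hvY (Finset.mem_map_of_mem _ hin.1) (Finset.mem_map_of_mem _ hin.2)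
      push_cast
      omega
    · simpa using hG.1.iCount_le (by norm_num) le_rfl (X := Y) ⟨_, Finset.mem_map_of_mem _ hsrc⟩
  · rw [Fintype.card_sum, card_edges_deleteVertex, hv, Fintype.card_unit, Fintype.card_subtype_ne]
    have := hG.2
    have := Finset.card_le_univ (G.incidenceFinset v)
    omega

theorem splitsIntoTwoSpanningTrees_of_card_incidenceFinset_eq_three [DecidableEq E]
    (hG : G.Tight 2 2) {v : V} (hv : (G.incidenceFinset v).card = 3)
    (ih : ∀ (E' : Type) [Fintype E'] [DecidableEq E'] (G' : Multigraph {w // w ≠ v} E'),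
      G'.Tight 2 2 → G'.SplitsIntoTwoSpanningTrees) :
    G.SplitsIntoTwoSpanningTrees := by
  obtain ⟨f, g, h, hinc, hfg, hfh, hgh, hsplit⟩ := hG.1.exists_splittable_pair hv
  have hloop := hG.1.src_ne_dst le_rfl
  have hmem : ∀ e, e ∈ G.incidenceFinset v ↔ e = f ∨ e = g ∨ e = h := by simp [hinc]
  have hf := (hmem f).2 (.inl rfl)
  have hg := (hmem g).2 (.inr (.inl rfl))
  have hh := (hmem h).2 (.inr (.inr rfl))
  set p : {w // w ≠ v} := ⟨G.otherEnd v f, otherEnd_ne (hloop f) hf⟩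
  set q : {w // w ≠ v} := ⟨G.otherEnd v g, otherEnd_ne (hloop g) hg⟩
  set G'' := (G.deleteVertex v).addEdge p q
  obtain ⟨S, hS, hSc, hnew⟩ : ∃ S : Finset _, G''.IsSpanningTree S ∧ G''.IsSpanningTree Sᶜ ∧
      Sum.inr () ∈ S := by
    obtain ⟨A, hA, hAc⟩ := ih _ G'' (hG.addEdge_deleteVertex hv hsplit)
    by_cases hnew : Sum.inr () ∈ A
    · exact ⟨A, hA, hAc, hnew⟩
    · exact ⟨Aᶜ, hAc, (compl_compl A).symm ▸ hA, Finset.mem_compl.2 hnew⟩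
  let m : {e // G.src e ≠ v ∧ G.dst e ≠ v} ⊕ Unit → E := Sum.elim Subtype.val fun _ => f
  have hm : Function.Injective m :=
    Subtype.val_injective.sumElim (fun _ _ _ => rfl) fun e _ hef =>
      val_notMem_incidenceFinset e (hef ▸ hf)
  have hrange : ∀ e, e ∉ Set.range m ↔ e = g ∨ e = h := by
    intro e
    simp only [m, Set.Sum.elim_range, Set.range_const, Set.mem_union, Set.mem_singleton_iff,
      not_or, notMem_range_val_iff, hmem]
    constructor
    · rintro ⟨hfgh, hef⟩
      exact hfgh.resolve_left hef
    · rintro (rfl | rfl)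
      exacts [⟨.inr (.inl rfl), hfg.symm⟩, ⟨.inr (.inr rfl), hfh.symm⟩]
  refine ⟨S.image m ∪ {g}, hS.extend hm ((hrange g).2 (.inl rfl)) hg (hloop g)
    (fun _ _ => reachable_of_adjOn_splitOff hf rfl hg rfl fun _ => rfl), ?_⟩
  rw [Finset.compl_image_union_eq hm (Finset.disjoint_singleton.2 hgh) (by simpa using hrange)]
  exact hSc.extend hm ((hrange h).2 (.inr rfl)) hh (hloop h)
    (fun _ _ => reachable_of_adjOn_splitOff hf rfl hg rfl fun hin =>
      absurd hnew (Finset.mem_compl.1 hin))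

end SplittingOff

theorem Tight.splitsIntoTwoSpanningTrees [Fintype V] [DecidableEq V] [Fintype E]
    [DecidableEq E] (hG : G.Tight 2 2) : G.SplitsIntoTwoSpanningTrees := by
  induction hn : Fintype.card V using Nat.strong_induction_on generalizing V E with
  | _ n ih =>
  obtain hV | hV := le_or_gt 2 (Fintype.card V)
  · obtain ⟨v, hv₃⟩ := hG.exists_card_incidenceFinset_le_three
    have hv₂ := hG.two_le_card_incidenceFinset hV v
    have ih' (E' : Type) [Fintype E'] [DecidableEq E'] (G' : Multigraph {w // w ≠ v} E')
        (hG' : G'.Tight 2 2) : G'.SplitsIntoTwoSpanningTrees :=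
      ih _ (by rw [Fintype.card_subtype_ne]; omega) hG' rfl
    obtain hv | hv : (G.incidenceFinset v).card = 2 ∨ (G.incidenceFinset v).card = 3 := by omega
    · exact splitsIntoTwoSpanningTrees_of_card_incidenceFinset_eq_two hG hv ih'
    · exact splitsIntoTwoSpanningTrees_of_card_incidenceFinset_eq_three hG hv ih'
  · have hcard := hG.2
    have hV₁ : Fintype.card V = 1 := by omega
    have hE₀ : Fintype.card E = 0 := by omega
    have htree (T : Finset E) : G.IsSpanningTree T := by
      refine ⟨fun u w => Fintype.card_le_one_iff.1 hV₁.le u w ▸ .refl, ?_⟩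
      have : IsEmpty E := Fintype.card_eq_zero_iff.1 hE₀
      rw [Finset.eq_empty_of_isEmpty T, Finset.card_empty, hV₁]
    exact ⟨∅, htree ∅, htree ∅ᶜ⟩

theorem card_filter_add_two_mul_card_le [Fintype V] [DecidableEq V] [DecidableEq E]
    {D T M : Finset E} (hD : D ⊆ T ∪ M) (hT : G.IsSpanningConnected T)
    (hM : G.IsSpanningConnected M) {X : Finset V} (hX : X.Nonempty) :
    (D.filter fun e => G.src e ∈ X ∧ G.dst e ∈ X).card + 2 * Fintype.card V ≤
      2 * X.card + T.card + M.card := by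
  have hsplit : (D.filter fun e => G.src e ∈ X ∧ G.dst e ∈ X) ⊆
      (T.filter fun e => G.src e ∈ X ∧ G.dst e ∈ X) ∪
        (M.filter fun e => G.src e ∈ X ∧ G.dst e ∈ X) := by
    rw [← Finset.filter_union]
    exact Finset.filter_subset_filter _ hD
  have := (Finset.card_le_card hsplit).trans (Finset.card_union_le _ _)
  have := hT.card_filter_add_card_le hX
  have := hM.card_filter_add_card_le hX
  omega

theorem Reachable.of_deleteEdge [DecidableEq E] {e₀ : E} {S : Finset {e // e ≠ e₀}} {u w : V}
    (h : (G.deleteEdge e₀).Reachable S u w) : G.Reachable ↑(S.image Subtype.val) u w :=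
  Relation.ReflTransGen.mono (fun _ _ ⟨e, he, hends⟩ => ⟨e.1, Finset.mem_image_of_mem _ he, hends⟩)
    _ _ h

theorem exists_spanningTree_mapGraph_of_tight_deleteEdge [Fintype V] [DecidableEq V]
    [Fintype E] [DecidableEq E] {e₀ : E} (hG : (G.deleteEdge e₀).Tight 2 2) :
    ∃ T M : Finset E, Disjoint T M ∧ T ∪ M = Finset.univ ∧
      G.IsSpanningTree T ∧ G.IsConnectedSpanningMapGraph M := by
  obtain ⟨A, hA, hAc⟩ := hG.splitsIntoTwoSpanningTrees
  have hcompl : (A.image Subtype.val)ᶜ = Aᶜ.image Subtype.val ∪ {e₀} := by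
    simpa using Finset.compl_image_union_eq Subtype.val_injective
      (Finset.disjoint_empty_left {e₀}) (by simp) A
  refine ⟨A.image Subtype.val, _, disjoint_compl_right, Finset.union_compl _,
    ⟨fun u w => Reachable.of_deleteEdge (hA.1 u w), ?_⟩, fun u w => ?_, ?_⟩
  · rw [Finset.card_image_of_injective _ Subtype.val_injective]
    exact hA.2
  · rw [hcompl]
    exact (Reachable.of_deleteEdge (hAc.1 u w)).mono (by simp)
  · rw [hcompl, Finset.card_union_of_disjoint (by simp), Finset.card_singleton,
      Finset.card_image_of_injective _ Subtype.val_injective]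
    exact hAc.2

theorem isP21_of_spanningTree_mapGraph [Fintype V] [DecidableEq V] [Fintype E] [DecidableEq E]
    {T M : Finset E} (hdisj : Disjoint T M) (huniv : T ∪ M = Finset.univ)
    (hT : G.IsSpanningTree T) (hM : G.IsConnectedSpanningMapGraph M) : G.IsP21 := by
  have : Nonempty V := Fintype.card_pos_iff.1 (by have := hT.2; omega)
  obtain ⟨e₀, he₀, hM'⟩ := IsSpanningConnected.exists_erase hM.1 (by simp [hM.2])
  have hcardE : Fintype.card E = T.card + M.card := by
    rw [← Finset.card_univ, ← huniv, Finset.card_union_of_disjoint hdisj]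
  have hcover : Finset.univ.erase e₀ ⊆ T ∪ M.erase e₀ := fun e he => by
    have heTM : e ∈ T ∪ M := huniv ▸ Finset.mem_univ e
    rw [Finset.mem_union] at heTM ⊢
    exact heTM.imp_right (Finset.mem_erase.2 ⟨Finset.ne_of_mem_erase he, ·⟩)
  have := hT.2
  have := hM.2
  have := Finset.card_erase_add_one he₀
  refine ⟨⟨fun X ⟨_, hX⟩ => ?_, by omega⟩, e₀, fun X ⟨_, hX⟩ => ?_, ?_⟩
  · have := card_filter_add_two_mul_card_le huniv.ge hT.1 hM.1 ⟨_, hX.1⟩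
    rw [iCount]
    omega
  · have := card_filter_add_two_mul_card_le hcover hT.1 hM' ⟨_, hX.1⟩
    rw [iCount_deleteEdge]
    omega
  · rw [Fintype.card_subtype_ne]
    omega

end Multigraph

/-- A multigraph `G = (V,E)` is a `P(2,1)`-graph iff `E` is the
edge-disjoint union of the edge set of a spanning tree of `G` and the edge set of a
spanning connected map-graph of `G`. -/
theorem statement_2 {V E : Type} [Fintype V] [Fintype E] [DecidableEq V] [DecidableEq E]
    (G : Multigraph V E) :
    G.IsP21 ↔
      ∃ T M : Finset E, Disjoint T M ∧ T ∪ M = Finset.univ ∧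
        G.IsSpanningTree T ∧ G.IsConnectedSpanningMapGraph M :=
  ⟨fun ⟨_, _, hG⟩ => Multigraph.exists_spanningTree_mapGraph_of_tight_deleteEdge hG,
    fun ⟨_, _, hdisj, huniv, hT, hM⟩ => Multigraph.isP21_of_spanningTree_mapGraph hdisj huniv hT hM⟩
end

section
/- Let G = (V,E) be a P(2,1)-graph. Then among the over-critical subsets of V there is a unique one of minimum cardinality, say X, and the induced subgraph G[X] is a (2,2)-circuit. -/
/-!
Let `e₀` be an edge such that `G - e₀` is `(2,2)`-tight. Every over-critical set spans `e₀`,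
since otherwise it would violate `(2,2)`-sparsity of `G - e₀`. So two over-critical sets `X`,
`Y` share an edge, and submodularity `i(X) + i(Y) ≤ i(X ∩ Y) + i(X ∪ Y)` together with
`(2,1)`-sparsity forces `X ∩ Y` to be over-critical. As `V` is over-critical, a minimum
over-critical set exists and lies inside every over-critical set, which gives uniqueness.
Finally, for an edge `f` of `G[X]` and `Y ⊆ X`: if `Y` spans `f` then `G[X] - f` has at most
`2|Y| - 2` edges on `Y`; otherwise equality `i(Y) = 2|Y| - 1` would make `Y` over-critical,
hence `Y = X` by minimality, but `X` spans `f`.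
-/

open Finset

lemma Finset.card_filter_univ_subtype {α : Type} [Fintype α] (Q : α → Prop) [DecidablePred Q]
    (P : α → Prop) [DecidablePred P] :
    #{e : {x // Q x} | P e} = #{e | Q e ∧ P e} := by
  rw [← card_map (Function.Embedding.subtype Q)]
  congr 1
  ext e
  simp [and_comm]

namespace Multigraph

variable {V E : Type} [Fintype E] [DecidableEq V]

def IsOverCritical (G : Multigraph V E) (X : Finset V) : Prop :=
  (G.iCount X : ℤ) = 2 * (#X : ℤ) - 1

lemma iCount_deleteEdge_s4 [DecidableEq E] (G : Multigraph V E) (e₀ : E) (Z : Finset V) :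
    ((G.deleteEdge e₀).iCount Z : ℤ) =
      G.iCount Z - if G.src e₀ ∈ Z ∧ G.dst e₀ ∈ Z then 1 else 0 := by
  have : (G.deleteEdge e₀).iCount Z =
      #(({e | G.src e ∈ Z ∧ G.dst e ∈ Z} : Finset E).erase e₀) := by
    refine (card_filter_univ_subtype (· ≠ e₀) fun e => G.src e ∈ Z ∧ G.dst e ∈ Z).trans ?_
    congr 1
    ext e
    simp
  rw [this, card_erase_eq_ite, iCount]
  simp only [mem_filter, mem_univ, true_and]
  split_ifs with h
  · have : 0 < #({e | G.src e ∈ Z ∧ G.dst e ∈ Z} : Finset E) := card_pos.2 ⟨e₀, by simpa⟩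
    omega
  · simp

lemma iCount_induce (G : Multigraph V E) (X : Finset V) (Y : Finset {v // v ∈ X}) :
    (G.induce X).iCount Y = G.iCount (Y.map (Function.Embedding.subtype _)) := by
  rw [iCount, iCount, ← card_map (Function.Embedding.subtype _)]
  congr 1
  ext e
  simp only [mem_map, mem_filter, mem_univ, true_and, Function.Embedding.subtype_apply]
  constructor
  · rintro ⟨e, he, rfl⟩
    exact ⟨⟨_, he.1, rfl⟩, ⟨_, he.2, rfl⟩⟩
  · rintro ⟨⟨u, hu, hue⟩, ⟨w, hw, hwe⟩⟩
    refine ⟨⟨e, hue ▸ u.2, hwe ▸ w.2⟩, ⟨?_, ?_⟩, rfl⟩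
    · convert hu
      exact Subtype.ext hue.symm
    · convert hw
      exact Subtype.ext hwe.symm

lemma iCount_univ [Fintype V] (G : Multigraph V E) : G.iCount univ = Fintype.card E := by
  simp [iCount]

lemma isOverCritical_univ_iff [Fintype V] (G : Multigraph V E) :
    G.IsOverCritical univ ↔ (Fintype.card E : ℤ) = 2 * (Fintype.card V : ℤ) - 1 := by
  rw [IsOverCritical, iCount_univ, card_univ]

lemma iCount_add_iCount_le_iCount_inter_add_iCount_union (G : Multigraph V E) (X Y : Finset V) :
    G.iCount X + G.iCount Y ≤ G.iCount (X ∩ Y) + G.iCount (X ∪ Y) := by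
  classical
  set A : Finset E := {e | G.src e ∈ X ∧ G.dst e ∈ X}
  set B : Finset E := {e | G.src e ∈ Y ∧ G.dst e ∈ Y}
  have hinter : ({e | G.src e ∈ X ∩ Y ∧ G.dst e ∈ X ∩ Y} : Finset E) = A ∩ B := by
    ext e; simp only [A, B, mem_filter, mem_univ, true_and, mem_inter]; tauto
  have hunion : A ∪ B ⊆ ({e | G.src e ∈ X ∪ Y ∧ G.dst e ∈ X ∪ Y} : Finset E) := by
    intro e; simp only [A, B, mem_filter, mem_univ, true_and, mem_union]; tauto
  calc #A + #B = #(A ∩ B) + #(A ∪ B) := (card_inter_add_card_union A B).symm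
    _ ≤ _ := by
      rw [iCount, iCount, hinter]
      exact Nat.add_le_add_left (card_le_card hunion) _

lemma IsOverCritical.inter {G : Multigraph V E} (hG : G.Sparse 2 1) {X Y : Finset V}
    (hX : G.IsOverCritical X) (hY : G.IsOverCritical Y)
    (hXY : ∃ e, G.src e ∈ X ∩ Y ∧ G.dst e ∈ X ∩ Y) : G.IsOverCritical (X ∩ Y) := by
  obtain ⟨e, hs, hd⟩ := hXY
  have hinter := hG (X ∩ Y) ⟨e, hs, hd⟩
  have hunion :=
    hG (X ∪ Y) ⟨e, mem_union_left _ (mem_inter.1 hs).1, mem_union_left _ (mem_inter.1 hd).1⟩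
  have := G.iCount_add_iCount_le_iCount_inter_add_iCount_union X Y
  have := card_inter_add_card_union X Y
  unfold IsOverCritical at *
  omega

lemma IsOverCritical.endpoints_mem [DecidableEq E] {G : Multigraph V E} {e₀ : E}
    (hG : (G.deleteEdge e₀).Sparse 2 2) {X : Finset V} (hX : G.IsOverCritical X) :
    G.src e₀ ∈ X ∧ G.dst e₀ ∈ X := by
  by_contra h
  have hdel := G.iCount_deleteEdge_s4 e₀ X
  rw [if_neg h] at hdel
  obtain ⟨e, he⟩ : ({e | G.src e ∈ X ∧ G.dst e ∈ X} : Finset E).Nonempty := by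
    rw [← card_pos]
    change 0 < G.iCount X
    unfold IsOverCritical at hX
    omega
  rw [mem_filter] at he
  have hne : e ≠ e₀ := by rintro rfl; exact h he.2
  have := hG X ⟨⟨e, hne⟩, he.2⟩
  unfold IsOverCritical at hX
  omega

lemma IsOverCritical.inter_of_deleteEdge_sparse [DecidableEq E] {G : Multigraph V E} {e₀ : E}
    (hG : G.Sparse 2 1) (hdel : (G.deleteEdge e₀).Sparse 2 2) {X Y : Finset V}
    (hX : G.IsOverCritical X) (hY : G.IsOverCritical Y) : G.IsOverCritical (X ∩ Y) :=
  have hXe := hX.endpoints_mem hdel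
  have hYe := hY.endpoints_mem hdel
  hX.inter hG hY ⟨e₀, mem_inter.2 ⟨hXe.1, hYe.1⟩, mem_inter.2 ⟨hXe.2, hYe.2⟩⟩

lemma exists_isMinOverCritical [Fintype V] {G : Multigraph V E} {Y : Finset V}
    (hY : G.IsOverCritical Y) : ∃ X, G.IsMinOverCritical X := by
  classical
  obtain ⟨X, hX, hmin⟩ := exists_min_image ({Z | G.IsOverCritical Z} : Finset (Finset V)) card
    ⟨Y, mem_filter.2 ⟨mem_univ _, hY⟩⟩
  exact ⟨X, (mem_filter.1 hX).2, fun Z hZ => hmin Z (mem_filter.2 ⟨mem_univ _, hZ⟩)⟩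

lemma IsMinOverCritical.eq_of_subset {G : Multigraph V E} {X Y : Finset V}
    (hX : G.IsMinOverCritical X) (hY : G.IsOverCritical Y) (hYX : Y ⊆ X) : Y = X :=
  eq_of_subset_of_card_le hYX (hX.2 Y hY)

lemma IsMinOverCritical.subset {G : Multigraph V E} {X Y : Finset V}
    (hX : G.IsMinOverCritical X) (hXY : G.IsOverCritical (X ∩ Y)) : X ⊆ Y := by
  rw [← hX.eq_of_subset hXY inter_subset_left]
  exact inter_subset_right

lemma sparse_deleteEdge_induce [DecidableEq E] {G : Multigraph V E} (hG : G.Sparse 2 1)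
    {X : Finset V} (hX : G.IsMinOverCritical X) (f : {e // G.src e ∈ X ∧ G.dst e ∈ X}) :
    ((G.induce X).deleteEdge f).Sparse 2 2 := by
  classical
  intro Y' ⟨e, hs, hd⟩
  have hcount := (G.induce X).iCount_deleteEdge_s4 f Y'
  rw [iCount_induce] at hcount
  set Y := Y'.map (Function.Embedding.subtype _)
  have hcard : #Y = #Y' := card_map _
  have hsp := hG Y ⟨e.1.1, mem_map_of_mem _ hs, mem_map_of_mem _ hd⟩
  split_ifs at hcount with hf
  · omega
  · suffices (G.iCount Y : ℤ) ≠ 2 * #Y - 1 by omega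
    intro hY
    have hYX : Y = X := hX.eq_of_subset hY fun v hv => by
      obtain ⟨w, -, rfl⟩ := mem_map.1 hv
      exact w.2
    have hY' (v : {v // v ∈ X}) : v ∈ Y' := by
      have hv : v.1 ∈ Y := by rw [hYX]; exact v.2
      obtain ⟨w, hw, hwv⟩ := mem_map.1 hv
      rwa [← Subtype.ext hwv]
    exact hf ⟨hY' _, hY' _⟩

lemma isCircuit22_induce [DecidableEq E] {G : Multigraph V E} (hG : G.Sparse 2 1)
    {X : Finset V} (hX : G.IsMinOverCritical X) : (G.induce X).IsCircuit22 := by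
  have hE : Fintype.card {e // G.src e ∈ X ∧ G.dst e ∈ X} = G.iCount X := Fintype.card_subtype _
  have hV : Fintype.card {v // v ∈ X} = #X := Fintype.card_coe X
  refine ⟨by rw [hE, hV]; exact hX.1, fun f => ⟨sparse_deleteEdge_induce hG hX f, ?_⟩⟩
  have hf : 0 < Fintype.card {e // G.src e ∈ X ∧ G.dst e ∈ X} := Fintype.card_pos_iff.2 ⟨f⟩
  have hcard : Fintype.card {e // e ≠ f} = Fintype.card {e // G.src e ∈ X ∧ G.dst e ∈ X} - 1 := by
    simp
  have hXoc := hX.1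
  omega

end Multigraph

open Multigraph

/-- A `P(2,1)`-graph has a unique over-critical set of minimum
cardinality `X`, and the induced subgraph `G[X]` is a `(2,2)`-circuit. -/
theorem statement_4 {V E : Type} [Fintype V] [Fintype E] [DecidableEq V] [DecidableEq E]
    (G : Multigraph V E) (hG : G.IsP21) :
    ∃ X : Finset V, G.IsMinOverCritical X ∧
      (∀ Y : Finset V, G.IsMinOverCritical Y → Y = X) ∧
      (G.induce X).IsCircuit22 := by
  obtain ⟨⟨hsp, hcard⟩, e₀, hdel, -⟩ := hG
  obtain ⟨X, hX⟩ := exists_isMinOverCritical (G.isOverCritical_univ_iff.2 hcard)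
  refine ⟨X, hX, fun Y hY => ?_, isCircuit22_induce hsp hX⟩
  have hYX : Y ⊆ X := hY.subset (IsOverCritical.inter_of_deleteEdge_sparse hsp hdel hY.1 hX.1)
  exact hX.eq_of_subset hY.1 hYX
end

section
/- Let G = (V,E) be a P(2,1)-graph. Then: (1) G is 2-edge-connected; (2) if X ⊆ V is critical (i(X) = 2|X| − 2), then the induced subgraph G[X] is connected; (3) if X ⊆ V is semi-critical (i(X) = 2|X| − 3), then either G[X] is connected, or G[X] has exactly two connected components, with vertex sets A and B, such that A is over-critical (i(A) = 2|A| − 1) and B is critical (i(B) = 2|B| − 2). -/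
/-! If `G - e₀` is `(2,2)`-tight, the edge `e₀` is spanned by at most one of two disjoint vertex
sets, so for disjoint nonempty `A`, `B` one of them satisfies `i ≤ 2|·| - 2` and the other
`i ≤ 2|·| - 1`; in particular `i(A) + i(B) ≤ 2|A| + 2|B| - 3`. If `G - e` were disconnected, a
component `A` would give `|E| - 1 ≤ i(A) + i(Aᶜ)`, and if `G[X]` were disconnected, a splitting
`X = A ⊔ B` without edges between the parts would give `i(X) ≤ i(A) + i(B)`; with `|E| = 2|V| - 1`
both contradict the bound unless `i(X) ≤ 2|X| - 3`. In the semi-critical case the bound is then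
attained, which forces one part to be over-critical and the other critical. -/

namespace Multigraph

variable {V E : Type}

section Counting

variable [Fintype E] [DecidableEq V] (G : Multigraph V E)

lemma iCount_le_of_sparse {k l : ℤ} (h : G.Sparse k l) {C : Finset V}
    (hC : l ≤ k * (C.card : ℤ)) : (G.iCount C : ℤ) ≤ k * (C.card : ℤ) - l := by
  by_cases hspan : ∃ e, G.src e ∈ C ∧ G.dst e ∈ C
  · exact h C hspan
  · have hzero : G.iCount C = 0 :=
      Finset.card_eq_zero.mpr (Finset.filter_eq_empty_iff.mpr fun e _ he => hspan ⟨e, he⟩)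
    rw [hzero]
    omega

lemma iCount_deleteEdge_of_not_spans [DecidableEq E] {e₀ : E} {C : Finset V}
    (h : ¬(G.src e₀ ∈ C ∧ G.dst e₀ ∈ C)) : (G.deleteEdge e₀).iCount C = G.iCount C := by
  refine Finset.card_bij (fun e _ => e.1) ?_ (fun _ _ _ _ => Subtype.ext) ?_
  · intro e he
    exact Finset.mem_filter.mpr ⟨Finset.mem_univ _, (Finset.mem_filter.mp he).2⟩
  · intro e he
    simp only [Finset.mem_filter, Finset.mem_univ, true_and] at he
    exact ⟨⟨e, fun he₀ => h (he₀ ▸ he)⟩, Finset.mem_filter.mpr ⟨Finset.mem_univ _, he⟩, rfl⟩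

lemma iCount_union_le {A B : Finset V}
    (hcross : ∀ e : E, ¬(G.src e ∈ A ∧ G.dst e ∈ B) ∧ ¬(G.src e ∈ B ∧ G.dst e ∈ A)) :
    G.iCount (A ∪ B) ≤ G.iCount A + G.iCount B := by
  classical
  refine le_trans (Finset.card_le_card ?_) (Finset.card_union_le _ _)
  intro e he
  simp only [Finset.mem_union, Finset.mem_filter, Finset.mem_univ, true_and] at he ⊢
  have := hcross e
  tauto

lemma card_le_iCount_add_iCount_compl_add_one [Fintype V] (A : Finset V) (e' : E)
    (hA : ∀ e ≠ e', (G.src e ∈ A ↔ G.dst e ∈ A)) :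
    Fintype.card E ≤ G.iCount A + G.iCount Aᶜ + 1 := by
  classical
  have hsub : Finset.univ.erase e' ⊆
      (Finset.univ.filter fun e => G.src e ∈ A ∧ G.dst e ∈ A) ∪
        Finset.univ.filter fun e => G.src e ∈ Aᶜ ∧ G.dst e ∈ Aᶜ := by
    intro e he
    have := hA e (Finset.ne_of_mem_erase he)
    simp only [Finset.mem_union, Finset.mem_filter, Finset.mem_univ, true_and, Finset.mem_compl]
    tauto
  have := (Finset.card_le_card hsub).trans (Finset.card_union_le _ _)
  rw [Finset.card_erase_of_mem (Finset.mem_univ _), Finset.card_univ] at this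
  unfold iCount
  omega

end Counting

section Cuts

variable (G : Multigraph V E)

lemma exists_cut_of_not_reachable [Fintype V] {F : Set E} {u w : V}
    (h : ¬Relation.ReflTransGen (G.AdjOn F) u w) :
    ∃ A : Finset V, u ∈ A ∧ w ∉ A ∧ ∀ e ∈ F, (G.src e ∈ A ↔ G.dst e ∈ A) := by
  classical
  refine ⟨Finset.univ.filter (Relation.ReflTransGen (G.AdjOn F) u),
    Finset.mem_filter.mpr ⟨Finset.mem_univ _, .refl⟩, by simpa, ?_⟩
  intro e he
  simp only [Finset.mem_filter, Finset.mem_univ, true_and]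
  exact ⟨fun hs => hs.tail ⟨e, he, Or.inl ⟨rfl, rfl⟩⟩,
    fun hd => hd.tail ⟨e, he, Or.inr ⟨rfl, rfl⟩⟩⟩

lemma exists_split_of_not_connectedOn [DecidableEq V] {X : Finset V}
    (h : ¬G.ConnectedOn (X : Set V)) :
    ∃ A B : Finset V, A ∪ B = X ∧ Disjoint A B ∧ A.Nonempty ∧ B.Nonempty ∧
      ∀ e : E, ¬(G.src e ∈ A ∧ G.dst e ∈ B) ∧ ¬(G.src e ∈ B ∧ G.dst e ∈ A) := by
  classical
  obtain ⟨u, hu, w, hw, huw⟩ : ∃ u ∈ X, ∃ w ∈ X,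
      ¬Relation.ReflTransGen (G.AdjIn (X : Set V)) u w := by
    simpa [ConnectedOn] using h
  set R := Relation.ReflTransGen (G.AdjIn (X : Set V)) u
  refine ⟨X.filter R, X.filter (¬R ·), Finset.filter_union_filter_not_eq _ _,
    Finset.disjoint_filter_filter_not _ _ _, ⟨u, Finset.mem_filter.mpr ⟨hu, .refl⟩⟩,
    ⟨w, Finset.mem_filter.mpr ⟨hw, huw⟩⟩, fun e => ⟨?_, ?_⟩⟩
  · rintro ⟨hs, hd⟩
    rw [Finset.mem_filter] at hs hd
    exact hd.2 (hs.2.tail ⟨hs.1, hd.1, e, Or.inl ⟨rfl, rfl⟩⟩)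
  · rintro ⟨hs, hd⟩
    rw [Finset.mem_filter] at hs hd
    exact hs.2 (hd.2.tail ⟨hd.1, hs.1, e, Or.inr ⟨rfl, rfl⟩⟩)

end Cuts

namespace IsP21

variable [Fintype V] [Fintype E] [DecidableEq V] [DecidableEq E] {G : Multigraph V E}

lemma iCount_le_of_disjoint (hG : G.IsP21) {A B : Finset V} (hAB : Disjoint A B)
    (hA : A.Nonempty) (hB : B.Nonempty) :
    ((G.iCount A : ℤ) ≤ 2 * A.card - 1 ∧ (G.iCount B : ℤ) ≤ 2 * B.card - 2) ∨
      ((G.iCount A : ℤ) ≤ 2 * A.card - 2 ∧ (G.iCount B : ℤ) ≤ 2 * B.card - 1) := by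
  obtain ⟨⟨hsparse, -⟩, e₀, hsparse₀, -⟩ := hG
  have hle₁ : ∀ C : Finset V, C.Nonempty → (G.iCount C : ℤ) ≤ 2 * C.card - 1 := fun C hC => by
    have := hC.card_pos
    exact G.iCount_le_of_sparse (k := 2) (l := 1) hsparse (by omega)
  have hle₂ : ∀ C : Finset V, C.Nonempty → ¬(G.src e₀ ∈ C ∧ G.dst e₀ ∈ C) →
      (G.iCount C : ℤ) ≤ 2 * C.card - 2 := fun C hC he₀ => by
    have := hC.card_pos
    rw [← G.iCount_deleteEdge_of_not_spans he₀]
    exact (G.deleteEdge e₀).iCount_le_of_sparse (k := 2) (l := 2) hsparse₀ (by omega)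
  by_cases he₀ : G.src e₀ ∈ A ∧ G.dst e₀ ∈ A
  · exact .inl ⟨hle₁ A hA, hle₂ B hB fun h => Finset.disjoint_left.mp hAB he₀.1 h.1⟩
  · exact .inr ⟨hle₂ A hA he₀, hle₁ B hB⟩

lemma iCount_add_iCount_le (hG : G.IsP21) {A B : Finset V} (hAB : Disjoint A B)
    (hA : A.Nonempty) (hB : B.Nonempty) :
    (G.iCount A + G.iCount B : ℤ) ≤ 2 * (A ∪ B).card - 3 := by
  rw [Finset.card_union_of_disjoint hAB]
  have := hG.iCount_le_of_disjoint hAB hA hB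
  push_cast
  omega

lemma twoEdgeConnected (hG : G.IsP21) : G.TwoEdgeConnected := by
  have hcard := hG.1.2
  have hreach : ∀ e' : E, ∀ u w : V, Relation.ReflTransGen (G.AdjOn {e | e ≠ e'}) u w := by
    intro e' u w
    by_contra huw
    obtain ⟨A, hu, hw, hA⟩ := G.exists_cut_of_not_reachable huw
    have hcut := G.card_le_iCount_add_iCount_compl_add_one A e' hA
    have hbound := hG.iCount_add_iCount_le disjoint_compl_right ⟨u, hu⟩
      ⟨w, Finset.mem_compl.mpr hw⟩
    rw [Finset.union_compl, Finset.card_univ] at hbound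
    omega
  refine ⟨⟨Fintype.card_pos_iff.mp (by omega), fun u w => ?_⟩, hreach⟩
  obtain ⟨_, e₀, -⟩ := hG
  exact Relation.ReflTransGen.mono (p := G.AdjOn Set.univ)
    (fun _ _ ⟨e, _, he⟩ => ⟨e, trivial, he⟩) _ _ (hreach e₀ u w)

lemma connectedOn_of_le_iCount (hG : G.IsP21) {X : Finset V}
    (hX : 2 * (X.card : ℤ) - 2 ≤ G.iCount X) : G.ConnectedOn (X : Set V) := by
  by_contra hdisc
  obtain ⟨A, B, rfl, hAB, hA, hB, hcross⟩ := G.exists_split_of_not_connectedOn hdisc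
  have := G.iCount_union_le hcross
  have := hG.iCount_add_iCount_le hAB hA hB
  omega

end IsP21

end Multigraph

/-- Let `G` be a `P(2,1)`-graph. Then (1) `G` is 2-edge-connected;
(2) if `X` is critical then `G[X]` is connected; (3) if `X` is semi-critical then
either `G[X]` is connected or it has exactly two connected components with vertex sets
`A` and `B` where `A` is over-critical and `B` is critical. -/
theorem statement_5 {V E : Type} [Fintype V] [Fintype E] [DecidableEq V] [DecidableEq E]
    (G : Multigraph V E) (hG : G.IsP21) :
    G.TwoEdgeConnected ∧
    (∀ X : Finset V, (G.iCount X : ℤ) = 2 * (X.card : ℤ) - 2 →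
      G.ConnectedOn (X : Set V)) ∧
    (∀ X : Finset V, (G.iCount X : ℤ) = 2 * (X.card : ℤ) - 3 →
      G.ConnectedOn (X : Set V) ∨
        ∃ A B : Finset V, A ∪ B = X ∧ Disjoint A B ∧ A.Nonempty ∧ B.Nonempty ∧
          (∀ e : E, ¬(G.src e ∈ A ∧ G.dst e ∈ B) ∧ ¬(G.src e ∈ B ∧ G.dst e ∈ A)) ∧
          G.ConnectedOn (A : Set V) ∧ G.ConnectedOn (B : Set V) ∧
          (G.iCount A : ℤ) = 2 * (A.card : ℤ) - 1 ∧
          (G.iCount B : ℤ) = 2 * (B.card : ℤ) - 2) := by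
  refine ⟨hG.twoEdgeConnected, fun X hX => hG.connectedOn_of_le_iCount hX.ge, fun X hX => ?_⟩
  by_cases hconn : G.ConnectedOn (X : Set V)
  · exact .inl hconn
  obtain ⟨A, B, rfl, hAB, hA, hB, hcross⟩ := G.exists_split_of_not_connectedOn hconn
  have hsub := G.iCount_union_le hcross
  have hcard := Finset.card_union_of_disjoint hAB
  refine .inr ?_
  rcases hG.iCount_le_of_disjoint hAB hA hB with ⟨hA', hB'⟩ | ⟨hA', hB'⟩
  · exact ⟨A, B, rfl, hAB, hA, hB, hcross, hG.connectedOn_of_le_iCount (by omega),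
      hG.connectedOn_of_le_iCount (by omega), by omega, by omega⟩
  · exact ⟨B, A, Finset.union_comm _ _, hAB.symm, hB, hA, fun e => (hcross e).symm,
      hG.connectedOn_of_le_iCount (by omega), hG.connectedOn_of_le_iCount (by omega),
      by omega, by omega⟩
end

section
/- Let ⟨G,m⟩ be a gain graph with |E| = 2|V| − 1, and suppose there exist real numbers x, y₁, y₂ and a placement p : V → ℝ² such that the rigidity matrix R_x(⟨G,m⟩,p) has rank 2|V| − 1. Then E is the edge-disjoint union of the edge set of a spanning tree of G and the edge set of a spanning connected map-graph of G. -/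
/-! ### Gain graphs: multigraphs with directed edges labelled by gains in `ℤ²`. -/

structure GainGraph (V E : Type) where
  src : E → V
  dst : E → V
  gain : E → ℤ × ℤ

namespace GainGraph

variable {V E : Type}

/-- The underlying multigraph of a gain graph. -/
def toMultigraph (G : GainGraph V E) : Multigraph V E := ⟨G.src, G.dst⟩

/-- `Walk G F u w g`: there is a walk from `u` to `w` using only edges in `F`
whose net gain (traversing an edge against its direction contributes `−m(e)`) is `g`. -/
inductive Walk (G : GainGraph V E) (F : Set E) : V → V → ℤ × ℤ → Prop
  | nil (v : V) : Walk G F v v 0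
  | fwd {u : V} {g : ℤ × ℤ} {e : E} (he : e ∈ F) (h : Walk G F u (G.src e) g) :
      Walk G F u (G.dst e) (g + G.gain e)
  | bwd {u : V} {g : ℤ × ℤ} {e : E} (he : e ∈ F) (h : Walk G F u (G.dst e) g) :
      Walk G F u (G.src e) (g - G.gain e)

/-- The subgraph with edge set `F` is constructive: some closed walk has nonzero net gain. -/
def Constructive (G : GainGraph V E) (F : Set E) : Prop :=
  ∃ (v : V) (g : ℤ × ℤ), G.Walk F v v g ∧ g ≠ 0

/-- The subgraph with edge set `F` is `x`-constructive:
some closed walk has net gain with nonzero first coordinate. -/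
def XConstructive (G : GainGraph V E) (F : Set E) : Prop :=
  ∃ (v : V) (g : ℤ × ℤ), G.Walk F v v g ∧ g.1 ≠ 0

/-- The gain assignment is `T_x`-constructive: every subgraph `(X,F)` with
`|F| = 2|X| − 2` is constructive, and every one with `|F| = 2|X| − 1` is `x`-constructive. -/
def TxConstructive (G : GainGraph V E) : Prop :=
  (∀ (X : Finset V) (F : Finset E), G.toMultigraph.IsSubgraphOn X F →
      (F.card : ℤ) = 2 * (X.card : ℤ) - 2 → G.Constructive (F : Set E)) ∧
  (∀ (X : Finset V) (F : Finset E), G.toMultigraph.IsSubgraphOn X F →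
      (F.card : ℤ) = 2 * (X.card : ℤ) - 1 → G.XConstructive (F : Set E))

/-- For the lattice matrix `L` with rows `(x,0)` and `(y₁,y₂)`, the vector
`p(src e) − p(dst e) − m_e·L ∈ ℝ²`. -/
noncomputable def edgeVec (G : GainGraph V E) (x y1 y2 : ℝ) (p : V → ℝ × ℝ) (e : E) : ℝ × ℝ :=
  ((p (G.src e)).1 - (p (G.dst e)).1 - (((G.gain e).1 : ℝ) * x + ((G.gain e).2 : ℝ) * y1),
    (p (G.src e)).2 - (p (G.dst e)).2 - ((G.gain e).2 : ℝ) * y2)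

/-- The rigidity matrix `R_x(⟨G,m⟩,p)` on the `x`-variable torus: rows indexed by edges,
columns indexed by the two coordinates of each vertex (`Sum.inl` = first coordinates,
`Sum.inr ∘ Sum.inl` = second coordinates) together with one final lattice column. -/
noncomputable def rigidityMatrix [DecidableEq V] (G : GainGraph V E) (x y1 y2 : ℝ)
    (p : V → ℝ × ℝ) : Matrix E (V ⊕ V ⊕ Unit) ℝ :=
  Matrix.of fun e c =>
    Sum.elim
      (fun v => (if G.src e = v then (G.edgeVec x y1 y2 p e).1 else 0) -
        (if G.dst e = v then (G.edgeVec x y1 y2 p e).1 else 0))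
      (Sum.elim
        (fun v => (if G.src e = v then (G.edgeVec x y1 y2 p e).2 else 0) -
          (if G.dst e = v then (G.edgeVec x y1 y2 p e).2 else 0))
        (fun _ => ((G.gain e).1 : ℝ) * (G.edgeVec x y1 y2 p e).1)) c

/-- Delete a vertex together with all edges incident to it. -/
def deleteVertex (G : GainGraph V E) (v : V) :
    GainGraph {w : V // w ≠ v} {e : E // G.src e ≠ v ∧ G.dst e ≠ v} :=
  ⟨fun e => ⟨G.src e.1, e.2.1⟩, fun e => ⟨G.dst e.1, e.2.2⟩, fun e => G.gain e.1⟩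

/-- Add one new edge directed from `u` to `w` with gain `g`. -/
def addEdge (G : GainGraph V E) (u w : V) (g : ℤ × ℤ) : GainGraph V (E ⊕ Unit) :=
  ⟨Sum.elim G.src fun _ => u, Sum.elim G.dst fun _ => w, Sum.elim G.gain fun _ => g⟩

end GainGraph

/-!
Each row of `R_x` is `d_e • a_e + s_e • b_e`, where `a_e` is the incidence vector of `e` placed
in the first-coordinate columns together with the lattice entry `(m_e)_x`, and `b_e` is the
incidence vector of `e` placed in the second-coordinate columns. Expanding a nonzero maximal minor
multilinearly in the rows, independence of the rows yields a partition `E = M ⊔ T` with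
`(a_e)_{e ∈ M}` and `(b_e)_{e ∈ T}` independent. Incidence vectors are killed by the coordinate sum
over `V` and, if the edges miss a cut `(X, Xᶜ)`, by the sums over `X` and over `Xᶜ`. Since the
`a_e` live in dimension `|V| + 1` and the `b_e` in dimension `|V|`, this gives `|M| ≤ |V|` and
`|T| ≤ |V| - 1`; as `|E| = 2|V| - 1` both are equalities, which leaves no room for a cut in
either edge set.
-/

open Module Function

theorem Matrix.linearIndependent_rows_of_rank_eq_card {m n K : Type*} [Fintype m] [Fintype n]
    [Field K] {A : Matrix m n K} (h : A.rank = Fintype.card m) : LinearIndependent K A.row := by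
  rw [linearIndependent_iff_card_eq_finrank_span, Set.finrank, ← A.rank_eq_finrank_span_row, h]

theorem Matrix.exists_det_piecewise_ne_zero {ι K : Type*} [Fintype ι] [DecidableEq ι] [Field K]
    {A B : ι → ι → K} {α β : ι → K}
    (h : (Matrix.of fun j => α j • A j + β j • B j).det ≠ 0) :
    ∃ S : Finset ι, (Matrix.of (S.piecewise A B)).det ≠ 0 := by
  have hexp : (Matrix.of fun j => α j • A j + β j • B j).det =
      ∑ S : Finset ι, (∏ j, S.piecewise α β j) * (Matrix.of (S.piecewise A B)).det := by
    change Matrix.detRowAlternating ((fun j => α j • A j) + fun j => β j • B j) = _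
    rw [AlternatingMap.map_add_univ]
    refine Finset.sum_congr rfl fun S _ => ?_
    have hpw : S.piecewise (fun j => α j • A j) (fun j => β j • B j) =
        fun j => S.piecewise α β j • S.piecewise A B j := by
      funext j
      by_cases hj : j ∈ S <;> simp [hj]
    rw [hpw, AlternatingMap.map_smul_univ]
    rfl
  rw [hexp] at h
  obtain ⟨S, -, hS⟩ := Finset.exists_ne_zero_of_sum_ne_zero h
  exact ⟨S, right_ne_zero_of_mul hS⟩

theorem LinearIndependent.exists_finset_of_smul_add_smul {ι K W : Type*} [Fintype ι]
    [DecidableEq ι] [Field K] [AddCommGroup W] [Module K W] {a b : ι → W} {α β : ι → K}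
    (h : LinearIndependent K fun i => α i • a i + β i • b i) :
    ∃ S : Finset ι, LinearIndependent K (fun i : S => a i) ∧
      LinearIndependent K (fun i : ↥Sᶜ => b i) := by
  -- a left inverse `g` of the family turns the rows into the identity matrix
  obtain ⟨g, hg⟩ := LinearMap.exists_leftInverse_of_injective _
    (LinearMap.ker_eq_bot.mpr (linearIndependent_iff_injective_fintypeLinearCombination.mp h))
  have hg1 : (Matrix.of fun j => α j • g (a j) + β j • g (b j)).det ≠ 0 := by
    have : (Matrix.of fun j => α j • g (a j) + β j • g (b j)) = 1 := by
      ext j k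
      have := congr_fun (LinearMap.congr_fun hg (Pi.single j 1)) k
      simp only [LinearMap.comp_apply, Fintype.linearCombination_apply_single, one_smul,
        map_add, map_smul, LinearMap.id_apply] at this
      rw [Matrix.of_apply, this, Matrix.one_eq_pi_single]
    simp [this]
  obtain ⟨S, hS⟩ := Matrix.exists_det_piecewise_ne_zero hg1
  have hpw : LinearIndependent K (S.piecewise a b) := by
    have hcomp : g ∘ S.piecewise a b = S.piecewise (g ∘ a) (g ∘ b) := by
      funext j
      by_cases hj : j ∈ S <;> simp [hj]
    refine LinearIndependent.of_comp g ?_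
    rw [hcomp]
    exact Matrix.linearIndependent_rows_of_det_ne_zero hS
  refine ⟨S, ?_, ?_⟩
  · convert hpw.comp _ Subtype.val_injective using 1
    funext i
    exact (S.piecewise_eq_of_mem _ _ i.2).symm
  · convert hpw.comp _ Subtype.val_injective using 1
    funext i
    exact (S.piecewise_eq_of_notMem _ _ (Finset.mem_compl.mp i.2)).symm

theorem LinearIndependent.card_add_finrank_le_of_map_eq_zero {ι K W W₂ : Type*} [Fintype ι]
    [Field K] [AddCommGroup W] [Module K W] [FiniteDimensional K W] [AddCommGroup W₂]
    [Module K W₂] {v : ι → W} (hv : LinearIndependent K v) {φ : W →ₗ[K] W₂}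
    (hφ : Surjective φ) (h0 : ∀ i, φ (v i) = 0) :
    Fintype.card ι + finrank K W₂ ≤ finrank K W := by
  have hker : LinearIndependent K fun i => (⟨v i, h0 i⟩ : LinearMap.ker φ) :=
    LinearIndependent.of_comp (LinearMap.ker φ).subtype hv
  have hrange : finrank K (LinearMap.range φ) = finrank K W₂ := by
    rw [LinearMap.range_eq_top.mpr hφ, finrank_top]
  have := LinearMap.finrank_range_add_finrank_ker φ
  have := hker.fintype_card_le_finrank
  omega

theorem surjective_sum_proj {V K : Type*} [DecidableEq V] [Field K] {X : Finset V} {u : V}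
    (hu : u ∈ X) :
    Surjective (∑ v ∈ X, LinearMap.proj v : (V → K) →ₗ[K] K) := fun t =>
  ⟨Pi.single u t, by simp [Finset.sum_pi_single', hu]⟩

theorem surjective_sum_proj_prod_sum_proj_compl {V K : Type*} [Fintype V] [DecidableEq V]
    [Field K] {X : Finset V} {u w : V} (hu : u ∈ X) (hw : w ∉ X) :
    Surjective ((∑ v ∈ X, LinearMap.proj v).prod (∑ v ∈ Xᶜ, LinearMap.proj v) :
      (V → K) →ₗ[K] K × K) := fun t =>
  ⟨Pi.single u t.1 + Pi.single w t.2, by simp [Finset.sum_add_distrib, hu, hw, Pi.single_apply]⟩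

namespace Multigraph

variable {V E : Type} (G : Multigraph V E)

theorem exists_separating_finset [Fintype V] {F : Set E} {u w : V}
    (h : ¬ Relation.ReflTransGen (G.AdjOn F) u w) :
    ∃ X : Finset V, u ∈ X ∧ w ∉ X ∧ ∀ e ∈ F, (G.src e ∈ X ↔ G.dst e ∈ X) := by
  classical
  refine ⟨Finset.univ.filter (Relation.ReflTransGen (G.AdjOn F) u),
    by simpa using Relation.ReflTransGen.refl,
    by simpa using h, fun e he => ?_⟩
  simp only [Finset.mem_filter, Finset.mem_univ, true_and]
  exact ⟨fun h => h.tail ⟨e, he, Or.inl ⟨rfl, rfl⟩⟩, fun h => h.tail ⟨e, he, Or.inr ⟨rfl, rfl⟩⟩⟩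

variable (K : Type*) [Field K] [DecidableEq V]

def incidence (e : E) (v : V) : K :=
  (if G.src e = v then 1 else 0) - (if G.dst e = v then 1 else 0)

theorem sum_incidence_eq_zero {X : Finset V} {e : E} (he : G.src e ∈ X ↔ G.dst e ∈ X) :
    ∑ v ∈ X, G.incidence K e v = 0 := by
  simp only [incidence, Finset.sum_sub_distrib, Finset.sum_ite_eq, he, sub_self]

variable [Fintype V] {K} {W : Type*} [AddCommGroup W] [Module K W] [FiniteDimensional K W]
  {π : W →ₗ[K] V → K} {F : Finset E} {r : F → W}

theorem card_add_one_le_finrank [Nonempty V] (hπ : Surjective π) (hr : LinearIndependent K r)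
    (hinc : ∀ e : F, π (r e) = G.incidence K e) : F.card + 1 ≤ finrank K W := by
  obtain ⟨u⟩ := ‹Nonempty V›
  have := hr.card_add_finrank_le_of_map_eq_zero (φ := _ ∘ₗ π)
    ((surjective_sum_proj (Finset.mem_univ u)).comp hπ) fun e => by
      simp [hinc, G.sum_incidence_eq_zero K (X := Finset.univ)]
  simpa using this

theorem reflTransGen_adjOn_of_finrank_le (hπ : Surjective π) (hr : LinearIndependent K r)
    (hinc : ∀ e : F, π (r e) = G.incidence K e) (hF : finrank K W ≤ F.card + 1) (u w : V) :
    Relation.ReflTransGen (G.AdjOn F) u w := by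
  by_contra h
  obtain ⟨X, hu, hw, hX⟩ := G.exists_separating_finset h
  have := hr.card_add_finrank_le_of_map_eq_zero
    (φ := ((∑ v ∈ X, LinearMap.proj v).prod (∑ v ∈ Xᶜ, LinearMap.proj v)) ∘ₗ π)
    ((surjective_sum_proj_prod_sum_proj_compl hu hw).comp hπ) fun e => by
      have hXc : G.src e ∈ Xᶜ ↔ G.dst e ∈ Xᶜ := by simpa using not_congr (hX e e.2)
      simp [hinc, G.sum_incidence_eq_zero K (hX e e.2), G.sum_incidence_eq_zero K hXc]
  simp only [Fintype.card_coe, finrank_prod, finrank_self] at this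
  omega

end Multigraph

namespace GainGraph

variable {V E : Type}

def xBlock : (V ⊕ Unit → ℝ) →ₗ[ℝ] (V ⊕ V ⊕ Unit → ℝ) where
  toFun y := Sum.elim (y ∘ Sum.inl) (Sum.elim 0 (y ∘ Sum.inr))
  map_add' y z := by ext (_ | _ | _) <;> simp
  map_smul' c y := by ext (_ | _ | _) <;> simp

def yBlock : (V → ℝ) →ₗ[ℝ] (V ⊕ V ⊕ Unit → ℝ) where
  toFun z := Sum.elim 0 (Sum.elim z 0)
  map_add' y z := by ext (_ | _ | _) <;> simp
  map_smul' c y := by ext (_ | _ | _) <;> simp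

variable [DecidableEq V] (G : GainGraph V E)

noncomputable def xIncidence (e : E) : V ⊕ Unit → ℝ :=
  Sum.elim (G.toMultigraph.incidence ℝ e) fun _ => ((G.gain e).1 : ℝ)

theorem rigidityMatrix_row (x y1 y2 : ℝ) (p : V → ℝ × ℝ) (e : E) :
    G.rigidityMatrix x y1 y2 p e =
      (G.edgeVec x y1 y2 p e).1 • xBlock (G.xIncidence e) +
        (G.edgeVec x y1 y2 p e).2 • yBlock (G.toMultigraph.incidence ℝ e) := by
  ext (v | v | _) <;>
    simp only [rigidityMatrix, Matrix.of_apply, Sum.elim_inl, Sum.elim_inr, xBlock, yBlock,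
      xIncidence, toMultigraph, Multigraph.incidence, LinearMap.coe_mk, AddHom.coe_mk,
      Sum.elim_comp_inl, Sum.elim_comp_inr, Pi.add_apply, Pi.smul_apply, Pi.zero_apply,
      smul_eq_mul, mul_zero, add_zero, zero_add] <;>
    (try split_ifs) <;> ring

end GainGraph

open GainGraph in
/-- If `|E| = 2|V| − 1` and the rigidity matrix attains rank
`2|V| − 1` for some `x, y₁, y₂` and some placement `p`, then `E` is the edge-disjoint
union of a spanning tree and a spanning connected map-graph. -/
theorem statement_14 {V E : Type} [Fintype V] [Fintype E] [DecidableEq V] [DecidableEq E]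
    (G : GainGraph V E) (hE : (Fintype.card E : ℤ) = 2 * (Fintype.card V : ℤ) - 1)
    (h : ∃ (x y1 y2 : ℝ) (p : V → ℝ × ℝ),
      ((G.rigidityMatrix x y1 y2 p).rank : ℤ) = 2 * (Fintype.card V : ℤ) - 1) :
    ∃ T M : Finset E, Disjoint T M ∧ T ∪ M = Finset.univ ∧
      G.toMultigraph.IsSpanningTree T ∧ G.toMultigraph.IsConnectedSpanningMapGraph M := by
  obtain ⟨x, y1, y2, p, hrank⟩ := h
  have hrows := Matrix.linearIndependent_rows_of_rank_eq_card (A := G.rigidityMatrix x y1 y2 p)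
    (by omega)
  rw [Matrix.row, funext (G.rigidityMatrix_row x y1 y2 p)] at hrows
  obtain ⟨M, hM, hT⟩ := hrows.exists_finset_of_smul_add_smul
  replace hM := LinearIndependent.of_comp xBlock hM
  replace hT := LinearIndependent.of_comp yBlock hT
  have hπ : Surjective (LinearMap.funLeft ℝ ℝ (Sum.inl : V → V ⊕ Unit)) :=
    LinearMap.funLeft_surjective_of_injective _ _ _ Sum.inl_injective
  have hMinc (e : M) : LinearMap.funLeft ℝ ℝ Sum.inl (G.xIncidence e) =
      G.toMultigraph.incidence ℝ e := rfl
  have : Nonempty V := Fintype.card_pos_iff.mp (by omega)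
  have hdimM : finrank ℝ (V ⊕ Unit → ℝ) = Fintype.card V + 1 := by simp
  have hdimT : finrank ℝ (V → ℝ) = Fintype.card V := finrank_fintype_fun_eq_card ℝ
  have hMcard := G.toMultigraph.card_add_one_le_finrank hπ hM hMinc
  have hTcard := G.toMultigraph.card_add_one_le_finrank (π := LinearMap.id) surjective_id hT
    fun _ => rfl
  have hcard : M.card + Mᶜ.card = Fintype.card E := M.card_add_card_compl
  refine ⟨Mᶜ, M, disjoint_compl_left, compl_sup_eq_top, ⟨?_, by omega⟩, ⟨?_, by omega⟩⟩
  · exact G.toMultigraph.reflTransGen_adjOn_of_finrank_le (π := LinearMap.id) surjective_id hT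
      (fun _ => rfl) (by omega)
  · exact G.toMultigraph.reflTransGen_adjOn_of_finrank_le hπ hM hMinc (by omega)
end
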